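/- arXiv:2506.15257 — 5 statements merged into one kernel-verified Lean document; each statement's English description precedes it below -/
import Mathlib

section
/- Let (a_n) be an arithmetic sequence with ratio sequence (q_n). For every x in the circle group 𝕋 there exists a unique sequence of integers (c_n)_{n≥1} such that 0 ≤ c_n ≤ q_n − 1 for every n, c_n < q_n − 1 for infinitely many n, and x = Σ_{n=1}^∞ c_n/a_n in 𝕋. -/
open Filter Topology

noncomputable section

/-- The circle group `𝕋 = ℝ/ℤ`. -/
abbrev Circle1 : Type := AddCircle (1 : ℝ)

/-- An arithmetic sequence `(a_n)_{n ≥ 1}`, with the convention `a 0 = 1`: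
a strictly increasing sequence of positive integers with `1 < a 1` and `a n ∣ a (n+1)`. -/
def IsArithSeq (a : ℕ → ℕ) : Prop :=
  a 0 = 1 ∧ StrictMono a ∧ ∀ n, a n ∣ a (n + 1)

/-- The ratio sequence: `q n = a n / a (n-1)` (so `q 1 = a 1`). -/
def ratioSeq (a : ℕ → ℕ) (n : ℕ) : ℕ := a n / a (n - 1)

/-- The subgroup of `𝕋` characterized by a sequence of integers `(u n)`. -/
def charSub (u : ℕ → ℕ) : Set Circle1 :=
  {x : Circle1 | Tendsto (fun n => (u n) • x) atTop (nhds 0)}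

/-- The set `{r·a_{k-1} : k ≥ 1, 1 ≤ r ≤ q_k - 1}` whose increasing enumeration is `(d_n)`. -/
def DSet (a : ℕ → ℕ) : Set ℕ :=
  {m | ∃ k, 1 ≤ k ∧ ∃ r, 1 ≤ r ∧ r ≤ ratioSeq a k - 1 ∧ m = r * a (k - 1)}

/-- `(d_n)` is the strictly increasing enumeration of `DSet a`. -/
def IsDSeq (a d : ℕ → ℕ) : Prop := StrictMono d ∧ Set.range d = DSet a

/-- An arithmetic-type sequence associated with the arithmetic sequence `(a_n)`:
a strictly increasing sequence of positive integers whose set of values contains all the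
values `a k` (for `k ≥ 1`) and is contained in `DSet a`. -/
def IsArithTypeSeq (a e : ℕ → ℕ) : Prop :=
  StrictMono e ∧ (∀ k, 1 ≤ k → a k ∈ Set.range e) ∧ Set.range e ⊆ DSet a

/-- `(c_n)_{n ≥ 1}` is the canonical representation of `x ∈ 𝕋` w.r.t. the arithmetic
sequence `(a_n)`: `0 ≤ c n ≤ q n - 1` for all `n ≥ 1`, `c n < q n - 1` infinitely often,
and `x = Σ_{n ≥ 1} c n / a n` in `𝕋`. -/
def IsCanonicalRep (a c : ℕ → ℕ) (x : Circle1) : Prop :=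
  (∀ n, 1 ≤ n → c n ≤ ratioSeq a n - 1) ∧
  {n | 1 ≤ n ∧ c n < ratioSeq a n - 1}.Infinite ∧
  x = ((∑' n : ℕ, (c (n + 1) : ℝ) / (a (n + 1) : ℝ) : ℝ) : Circle1)

/-- The support of a digit sequence: `supp(x) = {n ≥ 1 : c n ≠ 0}`. -/
def suppOf (c : ℕ → ℕ) : Set ℕ := {n | 1 ≤ n ∧ c n ≠ 0}

namespace AuxCR

variable {a : ℕ → ℕ}

lemma a_pos (ha : IsArithSeq a) (n : ℕ) : 0 < a n := by
  have h0 : a 0 = 1 := ha.1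
  have := ha.2.1.monotone (Nat.zero_le n)
  omega

lemma a_mul (ha : IsArithSeq a) (n : ℕ) : a (n + 1) = ratioSeq a (n + 1) * a n := by
  have h : (n + 1) - 1 = n := rfl
  rw [ratioSeq, h, Nat.div_mul_cancel (ha.2.2 n)]

lemma two_le_q (ha : IsArithSeq a) (n : ℕ) : 2 ≤ ratioSeq a (n + 1) := by
  have h1 : a n < a (n + 1) := ha.2.1 (by omega)
  have h2 := a_mul ha n
  have h3 := a_pos ha n
  by_contra h
  push_neg at h
  have h4 : ratioSeq a (n + 1) ≤ 1 := by omega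
  have := Nat.mul_le_mul_right (a n) h4
  omega

lemma a_pos_real (ha : IsArithSeq a) (n : ℕ) : (0 : ℝ) < a n := by
  exact_mod_cast a_pos ha n

lemma a_mul_real (ha : IsArithSeq a) (n : ℕ) :
    (a (n + 1) : ℝ) = (ratioSeq a (n + 1) : ℝ) * a n := by
  exact_mod_cast congrArg (Nat.cast : ℕ → ℝ) (a_mul ha n)

lemma q_pos_real (ha : IsArithSeq a) (n : ℕ) : (0 : ℝ) < ratioSeq a (n + 1) := by
  have := two_le_q ha n
  positivity

lemma inv_a_tendsto (ha : IsArithSeq a) (N : ℕ) :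
    Tendsto (fun k => ((a (N + k) : ℝ))⁻¹) atTop (𝓝 0) := by
  apply Tendsto.comp tendsto_inv_atTop_zero
  apply tendsto_natCast_atTop_atTop.comp
  exact ((ha.2.1.comp (fun i j h => Nat.add_lt_add_left h N)).tendsto_atTop)

lemma per_term (ha : IsArithSeq a) (n : ℕ) :
    ((ratioSeq a (n + 1) : ℝ) - 1) / a (n + 1) = (a n : ℝ)⁻¹ - (a (n + 1) : ℝ)⁻¹ := by
  have h1 := a_pos_real ha n
  have h2 := a_pos_real ha (n + 1)
  have hm := a_mul_real ha n
  rw [hm]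
  have hq := q_pos_real ha n
  field_simp

lemma term_nonneg (ha : IsArithSeq a) (n : ℕ) :
    (0 : ℝ) ≤ ((ratioSeq a (n + 1) : ℝ) - 1) / a (n + 1) := by
  have hq := two_le_q ha n
  have hq' : (2 : ℝ) ≤ ratioSeq a (n + 1) := by exact_mod_cast hq
  have := a_pos_real ha (n + 1)
  apply div_nonneg <;> linarith

lemma G_partial (ha : IsArithSeq a) (N m : ℕ) :
    ∑ k ∈ Finset.range m, ((ratioSeq a (k + N + 1) : ℝ) - 1) / a (k + N + 1)
      = (a N : ℝ)⁻¹ - (a (m + N) : ℝ)⁻¹ := by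
  induction m with
  | zero => simp
  | succ m ih =>
    rw [Finset.sum_range_succ, ih, per_term ha (m + N)]
    ring_nf

lemma G_hasSum (ha : IsArithSeq a) (N : ℕ) :
    HasSum (fun k => ((ratioSeq a (k + N + 1) : ℝ) - 1) / a (k + N + 1)) ((a N : ℝ)⁻¹) := by
  rw [hasSum_iff_tendsto_nat_of_nonneg (fun k => term_nonneg ha (k + N)) _]
  simp only [G_partial ha N]
  have h := (inv_a_tendsto ha N)
  have h2 : Tendsto (fun m => (a (m + N) : ℝ)⁻¹) atTop (𝓝 0) := by
    simpa [add_comm] using h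
  simpa using (tendsto_const_nhds (x := (a N : ℝ)⁻¹)).sub h2

lemma digit_cast (ha : IsArithSeq a) {c : ℕ → ℕ}
    (hb : ∀ n, 1 ≤ n → c n ≤ ratioSeq a n - 1) (k : ℕ) :
    (c (k + 1) : ℝ) ≤ (ratioSeq a (k + 1) : ℝ) - 1 := by
  have hq := two_le_q ha k
  have h := hb (k + 1) (by omega)
  have h2 : c (k + 1) + 1 ≤ ratioSeq a (k + 1) := by omega
  have h3 : (c (k + 1) : ℝ) + 1 ≤ (ratioSeq a (k + 1) : ℝ) := by exact_mod_cast h2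
  linarith

lemma rep_bounds (ha : IsArithSeq a) {c : ℕ → ℕ}
    (hb : ∀ n, 1 ≤ n → c n ≤ ratioSeq a n - 1)
    (hinf : {n | 1 ≤ n ∧ c n < ratioSeq a n - 1}.Infinite) :
    Summable (fun k => (c (k + 1) : ℝ) / a (k + 1)) ∧
    ∀ N : ℕ,
      (∑ k ∈ Finset.range N, (c (k + 1) : ℝ) / a (k + 1))
          ≤ (∑' k : ℕ, (c (k + 1) : ℝ) / a (k + 1)) ∧
      (∑' k : ℕ, (c (k + 1) : ℝ) / a (k + 1))
          < (∑ k ∈ Finset.range N, (c (k + 1) : ℝ) / a (k + 1)) + (a N : ℝ)⁻¹ := by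
  set f : ℕ → ℝ := fun k => (c (k + 1) : ℝ) / a (k + 1) with hf
  have hf0 : ∀ k, 0 ≤ f k := fun k => by
    have := a_pos_real ha (k + 1); positivity
  have hle : ∀ k, f k ≤ ((ratioSeq a (k + 1) : ℝ) - 1) / a (k + 1) := fun k => by
    have := a_pos_real ha (k + 1)
    exact (div_le_div_iff_of_pos_right (a_pos_real ha (k + 1))).mpr (digit_cast ha hb k)
  have hG0 : HasSum (fun k => ((ratioSeq a (k + 1) : ℝ) - 1) / a (k + 1)) ((a 0 : ℝ)⁻¹) := by
    have := G_hasSum ha 0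
    simpa using this
  have hsum : Summable f := Summable.of_nonneg_of_le hf0 hle hG0.summable
  refine ⟨hsum, fun N => ?_⟩
  constructor
  · exact Summable.sum_le_tsum (Finset.range N) (fun i _ => hf0 i) hsum
  · have hsplit := Summable.sum_add_tsum_nat_add (f := f) N hsum
    have htail : (∑' k : ℕ, f (k + N)) < (a N : ℝ)⁻¹ := by
      obtain ⟨m, hm, hmN⟩ := hinf.exists_gt N
      obtain ⟨j, hj⟩ : ∃ j, m = j + N + 1 := ⟨m - N - 1, by omega⟩
      have hGN := G_hasSum ha N
      rw [← hGN.tsum_eq]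
      apply Summable.tsum_lt_tsum_of_nonneg (i := j) (fun k => hf0 (k + N))
        (fun k => hle (k + N)) _ hGN.summable
      · have hp := a_pos_real ha (j + N + 1)
        apply (div_lt_div_iff_of_pos_right hp).mpr
        have hq := two_le_q ha (j + N)
        have hlt : c (j + N + 1) < ratioSeq a (j + N + 1) - 1 := by
          rw [← hj]; exact hm.2
        have h2 : c (j + N + 1) + 1 ≤ ratioSeq a (j + N + 1) - 1 := hlt
        have h3 : c (j + N + 1) + 2 ≤ ratioSeq a (j + N + 1) := by omega
        have h4 : (c (j + N + 1) : ℝ) + 2 ≤ (ratioSeq a (j + N + 1) : ℝ) := by exact_mod_cast h3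
        linarith
    linarith [hsplit, htail]


lemma tsum_lt_of_agree (ha : IsArithSeq a) {c c' : ℕ → ℕ}
    (hb : ∀ n, 1 ≤ n → c n ≤ ratioSeq a n - 1)
    (hinf : {n | 1 ≤ n ∧ c n < ratioSeq a n - 1}.Infinite)
    (hb' : ∀ n, 1 ≤ n → c' n ≤ ratioSeq a n - 1)
    (hinf' : {n | 1 ≤ n ∧ c' n < ratioSeq a n - 1}.Infinite)
    (n : ℕ) (hn : 1 ≤ n)
    (hagree : ∀ m, 1 ≤ m → m < n → c m = c' m) (hlt : c n < c' n) :
    (∑' k : ℕ, (c (k + 1) : ℝ) / a (k + 1)) < (∑' k : ℕ, (c' (k + 1) : ℝ) / a (k + 1)) := by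
  obtain ⟨m, rfl⟩ : ∃ m, n = m + 1 := ⟨n - 1, by omega⟩
  obtain ⟨hs, hbd⟩ := rep_bounds ha hb hinf
  obtain ⟨hs', hbd'⟩ := rep_bounds ha hb' hinf'
  have h1 := (hbd (m + 1)).2
  have h2 := (hbd' (m + 1)).1
  rw [Finset.sum_range_succ] at h1 h2
  have heq : ∑ k ∈ Finset.range m, (c (k + 1) : ℝ) / a (k + 1)
      = ∑ k ∈ Finset.range m, (c' (k + 1) : ℝ) / a (k + 1) :=
    Finset.sum_congr rfl fun k hk => by
      rw [hagree (k + 1) (by omega) (by have := Finset.mem_range.mp hk; omega)]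
  have hp := a_pos_real ha (m + 1)
  have hstep : (c (m + 1) : ℝ) / a (m + 1) + (a (m + 1) : ℝ)⁻¹
      ≤ (c' (m + 1) : ℝ) / a (m + 1) := by
    have hcc : (c (m + 1) : ℝ) + 1 ≤ (c' (m + 1) : ℝ) := by exact_mod_cast hlt
    have e : (c (m + 1) : ℝ) / a (m + 1) + (a (m + 1) : ℝ)⁻¹
        = ((c (m + 1) : ℝ) + 1) / a (m + 1) := by field_simp
    rw [e]
    exact (div_le_div_iff_of_pos_right hp).mpr hcc
  linarith

end AuxCR

open AuxCR in
/-- every `x ∈ 𝕋` has a canonical representation, unique on indices `n ≥ 1`. -/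
theorem canonical_representation_exists_unique (a : ℕ → ℕ) (ha : IsArithSeq a)
    (x : Circle1) :
    ∃ c : ℕ → ℕ, IsCanonicalRep a c x ∧
      ∀ c' : ℕ → ℕ, IsCanonicalRep a c' x → ∀ n, 1 ≤ n → c' n = c n := by
  classical
  -- choose a representative y ∈ [0,1)
  obtain ⟨y, hy0, hy1, hyx⟩ : ∃ y : ℝ, 0 ≤ y ∧ y < 1 ∧ (y : Circle1) = x := by
    refine ⟨(AddCircle.equivIco 1 0 x : ℝ), ?_, ?_, ?_⟩
    · exact (AddCircle.equivIco 1 0 x).2.1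
    · have := (AddCircle.equivIco 1 0 x).2.2
      simpa using this
    · exact (AddCircle.equivIco 1 0).symm_apply_apply x
  set z : ℕ → ℤ := fun n => ⌊(a n : ℝ) * y⌋ with hzdef
  have hz0 : z 0 = 0 := by
    simp only [hzdef, ha.1]
    push_cast
    rw [one_mul]
    exact Int.floor_eq_zero_iff.mpr ⟨hy0, hy1⟩
  have hrec : ∀ n, (ratioSeq a (n + 1) : ℤ) * z n ≤ z (n + 1) ∧
      z (n + 1) ≤ (ratioSeq a (n + 1) : ℤ) * z n + ((ratioSeq a (n + 1) : ℤ) - 1) := by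
    intro n
    have hq := q_pos_real ha n
    have hp := a_pos_real ha n
    have key : (a (n + 1) : ℝ) * y = (ratioSeq a (n + 1) : ℝ) * ((a n : ℝ) * y) := by
      rw [a_mul_real ha n]; ring
    constructor
    · apply Int.le_floor.2
      rw [key]
      push_cast
      have hfl := Int.floor_le ((a n : ℝ) * y)
      nlinarith
    · have h2 : (a (n + 1) : ℝ) * y < (ratioSeq a (n + 1) : ℝ) * ((z n : ℝ) + 1) := by
        rw [key]
        have hfl := Int.lt_floor_add_one ((a n : ℝ) * y)
        nlinarith
      have h3 : z (n + 1) < (ratioSeq a (n + 1) : ℤ) * (z n + 1) := by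
        apply Int.floor_lt.2
        push_cast
        exact h2
      have h4 : (ratioSeq a (n + 1) : ℤ) * (z n + 1)
          = (ratioSeq a (n + 1) : ℤ) * z n + (ratioSeq a (n + 1) : ℤ) := by ring
      rw [h4] at h3
      omega
  set c : ℕ → ℕ := fun n => (z n - (ratioSeq a n : ℤ) * z (n - 1)).toNat with hcdef
  have hcint : ∀ n, (c (n + 1) : ℤ) = z (n + 1) - (ratioSeq a (n + 1) : ℤ) * z n := by
    intro n
    have h := (hrec n).1
    have e : (n + 1) - 1 = n := rfl
    simp only [hcdef, e]
    rw [Int.toNat_of_nonneg (by omega)]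
  -- digit bound
  have hb : ∀ n, 1 ≤ n → c n ≤ ratioSeq a n - 1 := by
    intro n hn
    obtain ⟨m, rfl⟩ : ∃ m, n = m + 1 := ⟨n - 1, by omega⟩
    have h1 := (hrec m).1
    have h2 := (hrec m).2
    have h3 := hcint m
    have hq := two_le_q ha m
    omega
  -- partial sums
  have hpart : ∀ n, (∑ k ∈ Finset.range n, (c (k + 1) : ℝ) / a (k + 1)) = (z n : ℝ) / a n := by
    intro n
    induction n with
    | zero => simp [hz0, ha.1]
    | succ n ih =>
      rw [Finset.sum_range_succ, ih]
      have hp := a_pos_real ha n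
      have hq := q_pos_real ha n
      have hc : (c (n + 1) : ℝ) = (z (n + 1) : ℝ) - (ratioSeq a (n + 1) : ℝ) * (z n : ℝ) := by
        exact_mod_cast congrArg (Int.cast : ℤ → ℝ) (hcint n)
      rw [hc, a_mul_real ha n]
      field_simp
      ring
  -- convergence of partial sums to y
  have htend : Tendsto (fun n => (z n : ℝ) / a n) atTop (𝓝 y) := by
    have hinv : Tendsto (fun n => ((a n : ℝ))⁻¹) atTop (𝓝 0) := by
      have := inv_a_tendsto ha 0
      simpa using this
    have hlow : Tendsto (fun n => y - ((a n : ℝ))⁻¹) atTop (𝓝 y) := by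
      simpa using (tendsto_const_nhds (x := y)).sub hinv
    apply tendsto_of_tendsto_of_tendsto_of_le_of_le hlow tendsto_const_nhds
    · intro n
      have hp := a_pos_real ha n
      have e : (z n : ℝ) / a n + (a n : ℝ)⁻¹ = ((z n : ℝ) + 1) / a n := by field_simp
      have h5 : y ≤ (z n : ℝ) / a n + (a n : ℝ)⁻¹ := by
        rw [e, le_div_iff₀ hp]
        have := Int.lt_floor_add_one ((a n : ℝ) * y)
        nlinarith
      linarith
    · intro n
      have hp := a_pos_real ha n
      rw [div_le_iff₀ hp]
      have := Int.floor_le ((a n : ℝ) * y)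
      nlinarith
  have hf0 : ∀ k, 0 ≤ (c (k + 1) : ℝ) / a (k + 1) := fun k => by
    have := a_pos_real ha (k + 1); positivity
  have hHasSum : HasSum (fun k => (c (k + 1) : ℝ) / a (k + 1)) y := by
    rw [hasSum_iff_tendsto_nat_of_nonneg hf0]
    simp only [hpart]
    exact htend
  have htsum : (∑' k : ℕ, (c (k + 1) : ℝ) / a (k + 1)) = y := hHasSum.tsum_eq
  -- infinitely many strict digits
  have hinf : {n | 1 ≤ n ∧ c n < ratioSeq a n - 1}.Infinite := by
    by_contra hfin
    rw [Set.not_infinite] at hfin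
    obtain ⟨N, hN⟩ := hfin.bddAbove
    have hall : ∀ n, N + 1 ≤ n → (c n : ℤ) = (ratioSeq a n : ℤ) - 1 := by
      intro n hn
      have h1 : 1 ≤ n := by omega
      have h2 := hb n h1
      have h3 : ¬ (1 ≤ n ∧ c n < ratioSeq a n - 1) := by
        intro hmem
        have := hN hmem
        omega
      obtain ⟨m, rfl⟩ : ∃ m, n = m + 1 := ⟨n - 1, by omega⟩
      have hq := two_le_q ha m
      omega
    -- z (n+1) + 1 = q (n+1) * (z n + 1) for n ≥ N
    have hzrec : ∀ n, N ≤ n → z (n + 1) + 1 = (ratioSeq a (n + 1) : ℤ) * (z n + 1) := by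
      intro n hn
      have h := hcint n
      have h2 := hall (n + 1) (by omega)
      rw [h2] at h
      linarith [h]
    set t : ℝ := ((z (N + 1) : ℝ) + 1) / a (N + 1) with htdef
    have hconst : ∀ k, ((z (N + 1 + k) : ℝ) + 1) / a (N + 1 + k) = t := by
      intro k
      induction k with
      | zero => rfl
      | succ k ih =>
        have hr := hzrec (N + 1 + k) (by omega)
        have hp := a_pos_real ha (N + 1 + k)
        have hq := q_pos_real ha (N + 1 + k)
        have hrr : ((z (N + 1 + k + 1) : ℝ) + 1)
            = (ratioSeq a (N + 1 + k + 1) : ℝ) * ((z (N + 1 + k) : ℝ) + 1) := by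
          exact_mod_cast congrArg (Int.cast : ℤ → ℝ) hr
        show ((z (N + 1 + k + 1) : ℝ) + 1) / a (N + 1 + k + 1) = t
        rw [hrr, a_mul_real ha (N + 1 + k), ← ih]
        field_simp
    have hyt : y < t := by
      have hp := a_pos_real ha (N + 1)
      rw [htdef, lt_div_iff₀ hp]
      have := Int.lt_floor_add_one ((a (N + 1) : ℝ) * y)
      nlinarith
    have hty : t ≤ y := by
      have htd : Tendsto (fun k => y + ((a (N + 1 + k) : ℝ))⁻¹) atTop (𝓝 y) := by
        simpa using (tendsto_const_nhds (x := y)).add (inv_a_tendsto ha (N + 1))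
      apply ge_of_tendsto htd
      filter_upwards with k
      have hp := a_pos_real ha (N + 1 + k)
      have hfl := Int.floor_le ((a (N + 1 + k) : ℝ) * y)
      have e := hconst k
      rw [← e]
      have e2 : y + (a (N + 1 + k) : ℝ)⁻¹ = (y * a (N + 1 + k) + 1) / a (N + 1 + k) := by
        field_simp
      rw [e2, div_le_div_iff_of_pos_right hp]
      nlinarith
    linarith
  -- canonical representation
  have hcrep : IsCanonicalRep a c x := by
    refine ⟨hb, hinf, ?_⟩
    rw [htsum, hyx]
  refine ⟨c, hcrep, ?_⟩
  -- uniqueness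
  intro c' hc'
  obtain ⟨hb', hinf', hx'⟩ := hc'
  have hT' : (∑' k : ℕ, (c' (k + 1) : ℝ) / a (k + 1)) = y := by
    have h1 : ((∑' k : ℕ, (c' (k + 1) : ℝ) / a (k + 1) : ℝ) : Circle1) = (y : Circle1) := by
      rw [← hx', hyx]
    obtain ⟨hs', hbd'⟩ := rep_bounds ha hb' hinf'
    have hnn : (0 : ℝ) ≤ ∑' k : ℕ, (c' (k + 1) : ℝ) / a (k + 1) :=
      tsum_nonneg fun k => by have := a_pos_real ha (k + 1); positivity
    have hlt1 : (∑' k : ℕ, (c' (k + 1) : ℝ) / a (k + 1)) < 1 := by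
      have := (hbd' 0).2
      simp only [Finset.range_zero, Finset.sum_empty, zero_add, ha.1] at this
      simpa using this
    have hmem1 : (∑' k : ℕ, (c' (k + 1) : ℝ) / a (k + 1)) ∈ Set.Ico (0 : ℝ) (0 + 1) := by
      rw [Set.mem_Ico, zero_add]; exact ⟨hnn, hlt1⟩
    have hmem2 : y ∈ Set.Ico (0 : ℝ) (0 + 1) := by
      rw [Set.mem_Ico, zero_add]; exact ⟨hy0, hy1⟩
    rwa [AddCircle.coe_eq_coe_iff_of_mem_Ico hmem1 hmem2] at h1
  have key : ∀ n, 1 ≤ n → c' n = c n := by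
    intro n
    induction n using Nat.strong_induction_on with
    | _ n IH =>
      intro hn
      rcases lt_trichotomy (c' n) (c n) with h | h | h
      · exfalso
        have := tsum_lt_of_agree ha hb' hinf' hb hinf n hn
          (fun m h1 h2 => IH m h2 h1) h
        rw [hT', htsum] at this
        exact lt_irrefl _ this
      · exact h
      · exfalso
        have := tsum_lt_of_agree ha hb hinf hb' hinf' n hn
          (fun m h1 h2 => (IH m h2 h1).symm) h
        rw [hT', htsum] at this
        exact lt_irrefl _ this
  exact key
end
end

section
/- Let (a_n) be an arithmetic sequence with ratio sequence (q_n), and let x ∈ [0,1) be the real number x = Σ_{n=1}^∞ c_n/a_n given by a canonical representation. Then for every natural number n > 1 and every integer t ≥ 0 one has {a_{n−1}x} = c_n/q_n + c_{n+1}/(q_n q_{n+1}) + ⋯ + c_{n+t}/(q_n q_{n+1} ⋯ q_{n+t}) + {a_{n+t}x}/(q_n q_{n+1} ⋯ q_{n+t}), where {y} denotes the fractional part of the real number y. -/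
open Filter Topology

noncomputable section

section AuxFCF

variable (a c : ℕ → ℕ)

lemma fcf_pos (ha : IsArithSeq a) (n : ℕ) : 0 < a n := by
  have h1 : a 0 ≤ a n := ha.2.1.monotone (Nat.zero_le n)
  have h0 := ha.1
  omega

lemma fcf_dvd (ha : IsArithSeq a) {m k : ℕ} (h : m ≤ k) : a m ∣ a k := by
  induction k, h using Nat.le_induction with
  | base => exact dvd_rfl
  | succ k hk ih => exact ih.trans (ha.2.2 k)

lemma fcf_ratio_succ (ha : IsArithSeq a) (n : ℕ) :
    a (n + 1) = a n * ratioSeq a (n + 1) := by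
  unfold ratioSeq
  simp only [Nat.add_sub_cancel]
  exact (Nat.mul_div_cancel' (ha.2.2 n)).symm

lemma fcf_ratio_two (ha : IsArithSeq a) (n : ℕ) : 2 ≤ ratioSeq a (n + 1) := by
  have h1 := fcf_ratio_succ a ha n
  have h2 : a n < a (n + 1) := ha.2.1 (lt_add_one n)
  have h3 : 0 < a n := fcf_pos a ha n
  nlinarith

lemma fcf_pow_le (ha : IsArithSeq a) (n : ℕ) : 2 ^ n ≤ a n := by
  induction n with
  | zero => simp [ha.1]
  | succ n ih =>
      have h1 := fcf_ratio_succ a ha n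
      have h2 := fcf_ratio_two a ha n
      calc 2 ^ (n + 1) = 2 ^ n * 2 := by ring
        _ ≤ a n * ratioSeq a (n + 1) := Nat.mul_le_mul ih h2
        _ = a (n + 1) := h1.symm

lemma fcf_ratio_real (ha : IsArithSeq a) (n : ℕ) :
    (a (n + 1) : ℝ) = (a n : ℝ) * (ratioSeq a (n + 1) : ℝ) := by
  exact_mod_cast fcf_ratio_succ a ha n

/-- `f m k = c (m+1+k) * a m / a (m+1+k)` -/
def tailF (m k : ℕ) : ℝ := (c (m + 1 + k) : ℝ) * (a m : ℝ) / (a (m + 1 + k) : ℝ)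

def tailG (m k : ℕ) : ℝ := (a m : ℝ) / (a (m + k) : ℝ) - (a m : ℝ) / (a (m + k + 1) : ℝ)

def tailT (m : ℕ) : ℝ := ∑' k, tailF a c m k

lemma tailF_nonneg (m k : ℕ) : 0 ≤ tailF a c m k := by
  unfold tailF; positivity

lemma tailG_eq (ha : IsArithSeq a) (m k : ℕ) :
    tailG a m k = ((ratioSeq a (m + k + 1) : ℝ) - 1) * (a m : ℝ) / (a (m + k + 1) : ℝ) := by
  have hB : (0:ℝ) < (a (m + k) : ℝ) := by exact_mod_cast fcf_pos a ha (m + k)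
  have hq2 : 2 ≤ ratioSeq a (m + k + 1) := fcf_ratio_two a ha (m + k)
  have hq0 : (0:ℝ) < (ratioSeq a (m + k + 1) : ℝ) := by exact_mod_cast by omega
  have h1 := fcf_ratio_real a ha (m + k)
  unfold tailG
  set A := (a m : ℝ) with hA
  set B := (a (m + k) : ℝ) with hBdef
  set q := (ratioSeq a (m + k + 1) : ℝ) with hqdef
  rw [h1]
  field_simp

lemma tailF_le_G (ha : IsArithSeq a) (hbd : ∀ n, 1 ≤ n → c n ≤ ratioSeq a n - 1)
    (m k : ℕ) : tailF a c m k ≤ tailG a m k := by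
  rw [tailG_eq a ha m k]
  unfold tailF
  rw [show m + 1 + k = m + k + 1 from by omega]
  have hq := fcf_ratio_two a ha (m + k)
  have hb := hbd (m + k + 1) (by omega)
  have hcast : (c (m + k + 1) : ℝ) ≤ (ratioSeq a (m + k + 1) : ℝ) - 1 := by
    have h2 : (c (m + k + 1) : ℝ) ≤ ((ratioSeq a (m + k + 1) - 1 : ℕ) : ℝ) := by exact_mod_cast hb
    rw [Nat.cast_sub (by omega)] at h2
    simpa using h2
  have hC : (0:ℝ) ≤ (a (m + k + 1) : ℝ) := by positivity
  have hA : (0:ℝ) ≤ (a m : ℝ) := by positivity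
  exact div_le_div_of_nonneg_right (mul_le_mul_of_nonneg_right hcast hA) hC

lemma tailG_nonneg (ha : IsArithSeq a) (m k : ℕ) : 0 ≤ tailG a m k := by
  rw [tailG_eq a ha m k]
  have hq2 : 2 ≤ ratioSeq a (m + k + 1) := fcf_ratio_two a ha (m + k)
  have hq : (2:ℝ) ≤ (ratioSeq a (m + k + 1) : ℝ) := by exact_mod_cast hq2
  have hA : (0:ℝ) ≤ (a m : ℝ) := by positivity
  have hC : (0:ℝ) ≤ (a (m + k + 1) : ℝ) := by positivity
  apply div_nonneg (mul_nonneg (by linarith) hA) hC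

lemma tailG_hasSum (ha : IsArithSeq a) (m : ℕ) : HasSum (tailG a m) 1 := by
  rw [hasSum_iff_tendsto_nat_of_nonneg (tailG_nonneg a ha m)]
  have hfun : ∀ k, tailG a m k =
      (fun k => (a m : ℝ) / (a (m + k) : ℝ)) k - (fun k => (a m : ℝ) / (a (m + k) : ℝ)) (k + 1) := by
    intro k
    show _ = (a m : ℝ) / (a (m + k) : ℝ) - (a m : ℝ) / (a (m + (k + 1)) : ℝ)
    unfold tailG
    rw [show m + (k + 1) = m + k + 1 from by omega]
  have hps : ∀ K, ∑ k ∈ Finset.range K, tailG a m k = 1 - (a m : ℝ) / (a (m + K) : ℝ) := by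
    intro K
    rw [Finset.sum_congr rfl (fun k _ => hfun k), Finset.sum_range_sub']
    have hm : (0:ℝ) < (a m : ℝ) := by exact_mod_cast fcf_pos a ha m
    simp [div_self hm.ne']
  simp only [hps]
  have hto : Tendsto (fun K => (a m : ℝ) / (a (m + K) : ℝ)) atTop (nhds 0) := by
    apply squeeze_zero (fun K => by positivity) (g := fun K => (a m : ℝ) * (1/2) ^ K)
    · intro K
      have h1 : (2:ℝ) ^ K ≤ (a (m + K) : ℝ) := by
        have := fcf_pow_le a ha (m + K)
        have h2 : (2:ℕ) ^ K ≤ 2 ^ (m + K) := Nat.pow_le_pow_right (by norm_num) (by omega)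
        exact_mod_cast le_trans h2 this
      have h2 : (0:ℝ) < 2 ^ K := by positivity
      rw [div_le_iff₀ (lt_of_lt_of_le h2 h1)]
      have : (a m : ℝ) * (1/2)^K * 2^K = (a m : ℝ) := by
        rw [mul_assoc, ← mul_pow]; norm_num
      nlinarith [mul_le_mul_of_nonneg_left h1 (by positivity : (0:ℝ) ≤ (a m : ℝ) * (1/2)^K)]
    · have := tendsto_pow_atTop_nhds_zero_of_lt_one (by norm_num : (0:ℝ) ≤ 1/2) (by norm_num : (1:ℝ)/2 < 1)
      simpa using this.const_mul (a m : ℝ)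
  have := tendsto_const_nhds (x := (1:ℝ)) (f := atTop) |>.sub hto
  simpa using this

lemma tailF_summable (ha : IsArithSeq a) (hbd : ∀ n, 1 ≤ n → c n ≤ ratioSeq a n - 1)
    (m : ℕ) : Summable (tailF a c m) :=
  Summable.of_nonneg_of_le (tailF_nonneg a c m) (tailF_le_G a c ha hbd m)
    (tailG_hasSum a ha m).summable

lemma tailT_nonneg (m : ℕ) : 0 ≤ tailT a c m :=
  tsum_nonneg (tailF_nonneg a c m)

lemma tailT_lt_one (ha : IsArithSeq a) (hbd : ∀ n, 1 ≤ n → c n ≤ ratioSeq a n - 1)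
    (hinf : {n | 1 ≤ n ∧ c n < ratioSeq a n - 1}.Infinite) (m : ℕ) :
    tailT a c m < 1 := by
  obtain ⟨N, hNmem, hNgt⟩ := hinf.exists_gt m
  obtain ⟨hN1, hNlt⟩ := hNmem
  set k := N - (m + 1) with hk
  have hNk : m + 1 + k = N := by omega
  have hNk' : m + k + 1 = N := by omega
  have hstrict : tailF a c m k < tailG a m k := by
    rw [tailG_eq a ha m k]
    unfold tailF
    rw [hNk, hNk']
    have hq2 : 2 ≤ ratioSeq a N := by omega
    have hcast : (c N : ℝ) < (ratioSeq a N : ℝ) - 1 := by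
      have h2 : (c N : ℝ) < ((ratioSeq a N - 1 : ℕ) : ℝ) := by exact_mod_cast hNlt
      rw [Nat.cast_sub (by omega)] at h2
      simpa using h2
    have hApos : (0:ℝ) < (a m : ℝ) := by exact_mod_cast fcf_pos a ha m
    have hDpos : (0:ℝ) < (a N : ℝ) := by exact_mod_cast fcf_pos a ha N
    exact div_lt_div_of_pos_right (mul_lt_mul_of_pos_right hcast hApos) hDpos
  calc tailT a c m < ∑' k, tailG a m k :=
        Summable.tsum_lt_tsum (tailF_le_G a c ha hbd m) hstrict
          (tailF_summable a c ha hbd m) (tailG_hasSum a ha m).summable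
    _ = 1 := (tailG_hasSum a ha m).tsum_eq

lemma fract_eq_tailT (ha : IsArithSeq a) (hbd : ∀ n, 1 ≤ n → c n ≤ ratioSeq a n - 1)
    (hinf : {n | 1 ≤ n ∧ c n < ratioSeq a n - 1}.Infinite) (x : ℝ)
    (hrep : x = ∑' n : ℕ, (c (n + 1) : ℝ) / (a (n + 1) : ℝ)) (m : ℕ) :
    Int.fract ((a m : ℝ) * x) = tailT a c m := by
  have hsum0 : Summable (fun k : ℕ => (c (k + 1) : ℝ) / (a (k + 1) : ℝ)) := by
    refine (tailF_summable a c ha hbd 0).congr ?_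
    intro k
    unfold tailF
    rw [show 0 + 1 + k = k + 1 from by omega, ha.1]
    push_cast
    ring
  have hsum1 : Summable (fun k : ℕ => (a m : ℝ) * ((c (k + 1) : ℝ) / (a (k + 1) : ℝ))) :=
    hsum0.mul_left _
  have hx : (a m : ℝ) * x = ∑' k : ℕ, (a m : ℝ) * ((c (k + 1) : ℝ) / (a (k + 1) : ℝ)) := by
    rw [hrep, tsum_mul_left]
  have hsplit := Summable.sum_add_tsum_nat_add
    (f := fun k : ℕ => (a m : ℝ) * ((c (k + 1) : ℝ) / (a (k + 1) : ℝ))) m hsum1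
  have htail : (∑' i : ℕ, (a m : ℝ) * ((c (i + m + 1) : ℝ) / (a (i + m + 1) : ℝ)))
      = tailT a c m := by
    unfold tailT
    apply tsum_congr
    intro k
    unfold tailF
    rw [show m + 1 + k = k + m + 1 from by omega]
    ring
  have hz : ∃ z : ℤ, (∑ i ∈ Finset.range m, (a m : ℝ) * ((c (i + 1) : ℝ) / (a (i + 1) : ℝ)))
      = (z : ℝ) := by
    refine ⟨((∑ i ∈ Finset.range m, c (i + 1) * (a m / a (i + 1)) : ℕ) : ℤ), ?_⟩
    rw [Int.cast_natCast, Nat.cast_sum]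
    apply Finset.sum_congr rfl
    intro i hi
    have hdvd : a (i + 1) ∣ a m := fcf_dvd a ha (by have := Finset.mem_range.mp hi; omega)
    have hpos : (0:ℝ) < (a (i + 1) : ℝ) := by exact_mod_cast fcf_pos a ha (i + 1)
    have h1 : ((a m / a (i + 1) : ℕ) : ℝ) = (a m : ℝ) / (a (i + 1) : ℝ) :=
      Nat.cast_div hdvd hpos.ne'
    rw [Nat.cast_mul, h1]
    ring
  obtain ⟨z, hzval⟩ := hz
  have hfinal : (a m : ℝ) * x = (z : ℝ) + tailT a c m := by
    rw [hx, ← hsplit, hzval, htail]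
  rw [hfinal, Int.fract_intCast_add,
    Int.fract_eq_self.2 ⟨tailT_nonneg a c m, tailT_lt_one a c ha hbd hinf m⟩]

lemma tailT_rec (ha : IsArithSeq a) (hbd : ∀ n, 1 ≤ n → c n ≤ ratioSeq a n - 1) (m : ℕ) :
    tailT a c m = ((c (m + 1) : ℝ) + tailT a c (m + 1)) / (ratioSeq a (m + 1) : ℝ) := by
  have hs := tailF_summable a c ha hbd m
  have hq2 : 2 ≤ ratioSeq a (m + 1) := fcf_ratio_two a ha m
  have hq : (0:ℝ) < (ratioSeq a (m + 1) : ℝ) := by exact_mod_cast (by omega : 0 < ratioSeq a (m+1))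
  have hm : (0:ℝ) < (a m : ℝ) := by exact_mod_cast fcf_pos a ha m
  have h1 : tailF a c m 0 = (c (m + 1) : ℝ) / (ratioSeq a (m + 1) : ℝ) := by
    unfold tailF
    rw [show m + 1 + 0 = m + 1 from rfl, fcf_ratio_real a ha m]
    set X := (c (m + 1) : ℝ)
    set A := (a m : ℝ)
    set q := (ratioSeq a (m + 1) : ℝ)
    field_simp
  have h2 : ∀ k, tailF a c m (k + 1) = tailF a c (m + 1) k / (ratioSeq a (m + 1) : ℝ) := by
    intro k
    unfold tailF
    rw [show m + 1 + (k + 1) = m + 1 + 1 + k from by omega, fcf_ratio_real a ha m]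
    set X := (c (m + 1 + 1 + k) : ℝ)
    set A := (a m : ℝ)
    set D := (a (m + 1 + 1 + k) : ℝ)
    set q := (ratioSeq a (m + 1) : ℝ)
    rcases eq_or_ne D 0 with hD | hD
    · simp [hD]
    · field_simp
  have h0 : tailT a c m = tailF a c m 0 + ∑' k, tailF a c m (k + 1) := by
    unfold tailT
    exact Summable.tsum_eq_zero_add hs
  rw [h0, h1, tsum_congr h2, tsum_div_const]
  unfold tailT
  field_simp

end AuxFCF

/-- for `x ∈ [0,1)` with canonical representation `x = Σ c_n / a_n`, for every
`n > 1` and `t ≥ 0`,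
`{a_{n-1} x} = Σ_{i=0}^{t} c_{n+i} / (q_n ⋯ q_{n+i}) + {a_{n+t} x} / (q_n ⋯ q_{n+t})`. -/
theorem fract_canonical_formula (a : ℕ → ℕ) (ha : IsArithSeq a) (c : ℕ → ℕ) (x : ℝ)
    (hx : x ∈ Set.Ico (0 : ℝ) 1)
    (hbd : ∀ n, 1 ≤ n → c n ≤ ratioSeq a n - 1)
    (hinf : {n | 1 ≤ n ∧ c n < ratioSeq a n - 1}.Infinite)
    (hrep : x = ∑' n : ℕ, (c (n + 1) : ℝ) / (a (n + 1) : ℝ)) :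
    ∀ n, 1 < n → ∀ t : ℕ,
      Int.fract ((a (n - 1) : ℝ) * x) =
        (∑ i ∈ Finset.range (t + 1),
            (c (n + i) : ℝ) / ∏ j ∈ Finset.range (i + 1), (ratioSeq a (n + j) : ℝ)) +
          Int.fract ((a (n + t) : ℝ) * x) /
            ∏ j ∈ Finset.range (t + 1), (ratioSeq a (n + j) : ℝ) := by
  intro n hn t
  have key : ∀ k, Int.fract ((a k : ℝ) * x) = tailT a c k :=
    fract_eq_tailT a c ha hbd hinf x hrep
  have hq2 : ∀ j : ℕ, (2:ℝ) ≤ (ratioSeq a (n + j) : ℝ) := by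
    intro j
    rw [show n + j = (n + j - 1) + 1 from by omega]
    exact_mod_cast fcf_ratio_two a ha (n + j - 1)
  have hqpos : ∀ j, (0:ℝ) < (ratioSeq a (n + j) : ℝ) := fun j => lt_of_lt_of_le two_pos (hq2 j)
  have hn1 : n - 1 + 1 = n := by omega
  induction t with
  | zero =>
      simp only [Nat.zero_add, Finset.sum_range_one, Finset.prod_range_one, Nat.add_zero]
      rw [key, key]
      have hrec := tailT_rec a c ha hbd (n - 1)
      rw [hn1] at hrec
      rw [hrec]
      ring
  | succ t iht =>
      simp only [key] at iht ⊢
      rw [Finset.sum_range_succ, Finset.prod_range_succ, iht,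
        tailT_rec a c ha hbd (n + t)]
      simp only [show n + (t + 1) = n + t + 1 from rfl]
      have hP : (0:ℝ) < ∏ j ∈ Finset.range (t + 1), (ratioSeq a (n + j) : ℝ) :=
        Finset.prod_pos (fun j _ => hqpos j)
      have hQ : (0:ℝ) < (ratioSeq a (n + t + 1) : ℝ) := by
        rw [show n + t + 1 = n + (t + 1) from rfl]; exact hqpos (t + 1)
      field_simp
      ring
end
end

section
/- Let (a_n) be an arithmetic sequence and let x ∈ 𝕋 have canonical representation with digits (c_n(x)) and A = supp(x). If A is infinite, then the set 𝒢_A(𝕋) = {y ∈ 𝕋 : supp(y) ⊆ A and c_n(y) = c_n(x) for every n ∈ supp(y)} has cardinality 𝔠, the cardinality of the continuum. -/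
open Filter Topology

noncomputable section

/-! The digits of `x` restricted to any `S ⊆ supp(x)` are again a canonical digit sequence (they
stay below `q_n - 1` wherever those of `x` do), so they define a point of `𝒢_A(𝕋)`. Distinct
`S` give distinct points because canonical representations are unique: comparing two digit
sequences at their first difference, the tail of the smaller one is strictly less than
`1/a_n`, since `Σ_{k > n} (q_k - 1)/a_k` telescopes to `1/a_n` and some tail digit is not
maximal. Hence `𝒫(A)` injects into `𝒢_A(𝕋) ⊆ 𝕋`. -/

theorem hasSum_sub_succ_of_antitone {f : ℕ → ℝ} (hf : Antitone f)
    (h0 : Tendsto f atTop (𝓝 0)) : HasSum (fun k => f k - f (k + 1)) (f 0) := by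
  rw [hasSum_iff_tendsto_nat_of_nonneg fun k => sub_nonneg.2 (hf k.le_succ)]
  simp_rw [Finset.sum_range_sub']
  simpa using tendsto_const_nhds.sub h0

namespace IsArithSeq

variable {a : ℕ → ℕ}

theorem pos (ha : IsArithSeq a) (n : ℕ) : 0 < a n :=
  Nat.one_pos.trans_le (ha.1 ▸ ha.2.1.monotone n.zero_le)

theorem ratioSeq_succ_mul (ha : IsArithSeq a) (n : ℕ) :
    ratioSeq a (n + 1) * a n = a (n + 1) :=
  Nat.div_mul_cancel (ha.2.2 n)

theorem two_le_ratioSeq_succ (ha : IsArithSeq a) (n : ℕ) : 2 ≤ ratioSeq a (n + 1) := by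
  have hlt : a n < a (n + 1) := ha.2.1 n.lt_succ_self
  rw [← ha.ratioSeq_succ_mul n] at hlt
  by_contra! h
  interval_cases ratioSeq a (n + 1) <;> omega

theorem maxDigit_div_eq (ha : IsArithSeq a) (n : ℕ) :
    ((ratioSeq a (n + 1) - 1 : ℕ) : ℝ) / a (n + 1) = 1 / a n - 1 / a (n + 1) := by
  have hq : ((ratioSeq a (n + 1) * a n : ℕ) : ℝ) = a (n + 1) := by
    exact_mod_cast ha.ratioSeq_succ_mul n
  have han : (a n : ℝ) ≠ 0 := by exact_mod_cast (ha.pos n).ne'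
  have han1 : (a (n + 1) : ℝ) ≠ 0 := by exact_mod_cast (ha.pos (n + 1)).ne'
  rw [Nat.cast_sub (by linarith [ha.two_le_ratioSeq_succ n])]
  push_cast at hq ⊢
  field_simp
  linear_combination hq

theorem hasSum_inv_sub_inv (ha : IsArithSeq a) (N : ℕ) :
    HasSum (fun k => (1 / a (k + N) : ℝ) - 1 / a (k + N + 1)) (1 / a N) := by
  have hanti : Antitone fun k => (1 / a (k + N) : ℝ) := fun i j hij =>
    one_div_le_one_div_of_le (by exact_mod_cast ha.pos _)
      (by exact_mod_cast ha.2.1.monotone (by omega))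
  have hlim : Tendsto (fun k => (1 / a (k + N) : ℝ)) atTop (𝓝 0) := by
    simp only [one_div]
    exact (tendsto_natCast_atTop_atTop.comp
      (ha.2.1.tendsto_atTop.comp (tendsto_add_atTop_nat N))).inv_tendsto_atTop
  simpa [add_right_comm] using hasSum_sub_succ_of_antitone hanti hlim

end IsArithSeq

def digitSum (a d : ℕ → ℕ) : ℝ := ∑' n, (d (n + 1) : ℝ) / a (n + 1)

section Digits

variable {a c d e : ℕ → ℕ}

theorem digit_div_le (ha : IsArithSeq a) (hd : ∀ n, 1 ≤ n → d n ≤ ratioSeq a n - 1) (n : ℕ) :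
    (d (n + 1) : ℝ) / a (n + 1) ≤ 1 / a n - 1 / a (n + 1) := by
  rw [← ha.maxDigit_div_eq]
  gcongr
  exact hd _ n.succ_pos

theorem digit_div_lt (ha : IsArithSeq a) {n : ℕ} (hn : d (n + 1) < ratioSeq a (n + 1) - 1) :
    (d (n + 1) : ℝ) / a (n + 1) < 1 / a n - 1 / a (n + 1) := by
  rw [← ha.maxDigit_div_eq]
  have := ha.pos (n + 1)
  gcongr

theorem tsum_digit_div_tail_lt (ha : IsArithSeq a) (hd : ∀ n, 1 ≤ n → d n ≤ ratioSeq a n - 1)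
    (hinf : {n | 1 ≤ n ∧ d n < ratioSeq a n - 1}.Infinite) (N : ℕ) :
    ∑' k, (d (k + N + 1) : ℝ) / a (k + N + 1) < 1 / a N := by
  obtain ⟨m, ⟨hm1, hm⟩, hNm⟩ := hinf.exists_gt N
  obtain ⟨k, rfl⟩ : ∃ k, m = k + N + 1 := ⟨m - N - 1, by omega⟩
  have htel := ha.hasSum_inv_sub_inv N
  exact (Summable.tsum_lt_tsum_of_nonneg (i := k) (fun _ => by positivity)
    (fun j => digit_div_le ha hd (j + N)) (digit_div_lt ha hm) htel.summable).trans_eq htel.tsum_eq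

theorem summable_digit_div (ha : IsArithSeq a) (hd : ∀ n, 1 ≤ n → d n ≤ ratioSeq a n - 1) :
    Summable fun n => (d (n + 1) : ℝ) / a (n + 1) :=
  Summable.of_nonneg_of_le (fun _ => by positivity) (digit_div_le ha hd)
    (by simpa using (ha.hasSum_inv_sub_inv 0).summable)

theorem digitSum_nonneg : 0 ≤ digitSum a d := tsum_nonneg fun _ => by positivity

theorem digitSum_lt_one (ha : IsArithSeq a) (hd : ∀ n, 1 ≤ n → d n ≤ ratioSeq a n - 1)
    (hinf : {n | 1 ≤ n ∧ d n < ratioSeq a n - 1}.Infinite) : digitSum a d < 1 := by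
  simpa [digitSum, ha.1] using tsum_digit_div_tail_lt ha hd hinf 0

theorem digitSum_lt_of_lex_lt (ha : IsArithSeq a) (hd : ∀ n, 1 ≤ n → d n ≤ ratioSeq a n - 1)
    (he : ∀ n, 1 ≤ n → e n ≤ ratioSeq a n - 1)
    (heinf : {n | 1 ≤ n ∧ e n < ratioSeq a n - 1}.Infinite) {n : ℕ}
    (hpre : ∀ k < n, e (k + 1) = d (k + 1)) (hlt : e (n + 1) < d (n + 1)) :
    digitSum a e < digitSum a d := by
  have hsplit := (summable_digit_div ha he).sum_add_tsum_nat_add (n + 1)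
  have hpre_sum : ∑ k ∈ Finset.range n, (e (k + 1) : ℝ) / a (k + 1) =
      ∑ k ∈ Finset.range n, (d (k + 1) : ℝ) / a (k + 1) :=
    Finset.sum_congr rfl fun k hk => by rw [hpre k (Finset.mem_range.1 hk)]
  have hstep : (e (n + 1) : ℝ) / a (n + 1) + 1 / a (n + 1) ≤ (d (n + 1) : ℝ) / a (n + 1) := by
    rw [← add_div]
    gcongr
    exact_mod_cast hlt
  calc digitSum a e
      = ∑ k ∈ Finset.range n, (e (k + 1) : ℝ) / a (k + 1) + (e (n + 1) : ℝ) / a (n + 1) +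
          ∑' k, (e (k + (n + 1) + 1) : ℝ) / a (k + (n + 1) + 1) := by
        rw [digitSum, ← hsplit, Finset.sum_range_succ]
    _ < ∑ k ∈ Finset.range n, (d (k + 1) : ℝ) / a (k + 1) + (e (n + 1) : ℝ) / a (n + 1) +
          1 / a (n + 1) := by
        rw [hpre_sum]
        gcongr
        exact tsum_digit_div_tail_lt ha he heinf (n + 1)
    _ ≤ ∑ k ∈ Finset.range (n + 1), (d (k + 1) : ℝ) / a (k + 1) := by
        rw [Finset.sum_range_succ]
        linarith
    _ ≤ digitSum a d :=
        (summable_digit_div ha hd).sum_le_tsum _ fun _ _ => by positivity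

theorem eq_of_digitSum_eq (ha : IsArithSeq a) (hd : ∀ n, 1 ≤ n → d n ≤ ratioSeq a n - 1)
    (hdinf : {n | 1 ≤ n ∧ d n < ratioSeq a n - 1}.Infinite)
    (he : ∀ n, 1 ≤ n → e n ≤ ratioSeq a n - 1)
    (heinf : {n | 1 ≤ n ∧ e n < ratioSeq a n - 1}.Infinite)
    (h : digitSum a d = digitSum a e) (n : ℕ) (hn : 1 ≤ n) : d n = e n := by
  obtain ⟨n, rfl⟩ : ∃ m, n = m + 1 := ⟨n - 1, by omega⟩
  by_contra hne
  have hex : ∃ m, d (m + 1) ≠ e (m + 1) := ⟨n, hne⟩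
  have hpre : ∀ k < Nat.find hex, d (k + 1) = e (k + 1) := fun k hk =>
    not_not.1 (Nat.find_min hex hk)
  rcases (Nat.find_spec hex).lt_or_gt with hlt | hlt
  · exact (digitSum_lt_of_lex_lt ha he hd hdinf hpre hlt).ne h
  · exact (digitSum_lt_of_lex_lt ha hd he heinf (fun k hk => (hpre k hk).symm) hlt).ne h.symm

theorem IsCanonicalRep.digits_eq (ha : IsArithSeq a) {y : Circle1} (hd : IsCanonicalRep a d y)
    (he : IsCanonicalRep a e y) (n : ℕ) (hn : 1 ≤ n) : d n = e n := by
  have mem_Ico {f : ℕ → ℕ} (hf : IsCanonicalRep a f y) : digitSum a f ∈ Set.Ico 0 (0 + 1) :=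
    ⟨digitSum_nonneg, by simpa using digitSum_lt_one ha hf.1 hf.2.1⟩
  refine eq_of_digitSum_eq ha hd.1 hd.2.1 he.1 he.2.1 ?_ n hn
  exact (AddCircle.coe_eq_coe_iff_of_mem_Ico (mem_Ico hd) (mem_Ico he)).1 (hd.2.2.symm.trans he.2.2)

theorem IsCanonicalRep.indicator {x : Circle1} (hc : IsCanonicalRep a c x) (S : Set ℕ) :
    IsCanonicalRep a (S.indicator c) (digitSum a (S.indicator c)) := by
  have hle (n : ℕ) : S.indicator c n ≤ c n := Set.indicator_le_self S c n
  refine ⟨fun n hn => (hle n).trans (hc.1 n hn), hc.2.1.mono ?_, rfl⟩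
  exact fun n ⟨hn, hlt⟩ => ⟨hn, (hle n).trans_lt hlt⟩

end Digits

section Support

variable {c : ℕ → ℕ} {S T : Set ℕ}

theorem suppOf_indicator_subset : suppOf (S.indicator c) ⊆ S :=
  fun _ hn => Set.mem_of_indicator_ne_zero hn.2

theorem subset_of_indicator_eq (hS : S ⊆ suppOf c)
    (h : ∀ n, 1 ≤ n → S.indicator c n = T.indicator c n) : S ⊆ T := fun n hn =>
  Set.mem_of_indicator_ne_zero <| by
    rw [← h n (hS hn).1, Set.indicator_of_mem hn]
    exact (hS hn).2

end Support

theorem AddCircle.mk_le_continuum (p : ℝ) : Cardinal.mk (AddCircle p) ≤ Cardinal.continuum :=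
  (Cardinal.mk_le_of_surjective (QuotientAddGroup.mk_surjective)).trans_eq Cardinal.mk_real

/-- if `A = supp(x)` is infinite then
`𝒢_A(𝕋) = {y : supp(y) ⊆ A, c_n(y) = c_n(x) on supp(y)}` has cardinality `𝔠`. -/
theorem card_G_A_continuum (a : ℕ → ℕ) (ha : IsArithSeq a) (c : ℕ → ℕ) (x : Circle1)
    (hc : IsCanonicalRep a c x) (A : Set ℕ) (hA : A = suppOf c) (hAinf : A.Infinite) :
    Cardinal.mk ↥{y : Circle1 | ∃ c' : ℕ → ℕ, IsCanonicalRep a c' y ∧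
        suppOf c' ⊆ A ∧ ∀ n ∈ suppOf c', c' n = c n} = Cardinal.continuum := by
  subst hA
  let point (S : 𝒫 suppOf c) : {y : Circle1 | ∃ c' : ℕ → ℕ, IsCanonicalRep a c' y ∧
      suppOf c' ⊆ suppOf c ∧ ∀ n ∈ suppOf c', c' n = c n} :=
    ⟨digitSum a (S.1.indicator c), S.1.indicator c, hc.indicator S.1,
      suppOf_indicator_subset.trans S.2,
      fun _ hn => Set.indicator_of_mem (suppOf_indicator_subset hn) c⟩
  have point_injective : Function.Injective point := fun S T hST => by
    have hy : (digitSum a (T.1.indicator c) : Circle1) = digitSum a (S.1.indicator c) :=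
      congrArg Subtype.val hST.symm
    have hdigits := (hc.indicator S.1).digits_eq ha (hy ▸ hc.indicator T.1)
    exact Subtype.ext ((subset_of_indicator_eq S.2 hdigits).antisymm
      (subset_of_indicator_eq T.2 fun n hn => (hdigits n hn).symm))
  have : Infinite (suppOf c) := hAinf.to_subtype
  refine le_antisymm ((Cardinal.mk_set_le _).trans (AddCircle.mk_le_continuum 1)) ?_
  calc Cardinal.continuum = Cardinal.mk (𝒫 suppOf c) := by
        rw [Cardinal.mk_powerset, Cardinal.mk_eq_aleph0, Cardinal.two_power_aleph0]
    _ ≤ _ := Cardinal.mk_le_of_injective point_injective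
end
end

section
/- Let (a_n) be an arithmetic sequence whose ratio sequence (q_n) is unbounded. Then there exists an arithmetic-type sequence (e_n) associated with (a_n) such that the ratio sequence (e_{n+1}/e_n) is unbounded and t_{(e_n)}(𝕋) is countable. -/
open Filter Topology

noncomputable section

/-!
Take for `e` the increasing enumeration of `{r * a k : r ∈ R(q_{k+1})}`, where `R(q)` consists of
`1` and the pairs `2^j * 2^g`, `2^j * (2^g + 1)` below `q`, with `g = ⌊log₂ q⌋ / 4`. The element
after `a k` is at least `2^g * a k`, so unbounded ratios `q` give unbounded ratios of `e`.

If `e n • x → 0`, then eventually every `r • (a k • x)` with `r ∈ R(q_{k+1})` is small.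
Differences of the pairs make `2^j • a k • x` small for all `j` up to about `log₂ q`, and
doubling (`‖2 • y‖ = 2 ‖y‖` for small `y`) turns this into `q_{k+1} ‖a k • x‖ ≤ 1/2`. Hence
`‖a (k+1) • x‖ = q_{k+1} ‖a k • x‖ ≥ 2 ‖a k • x‖` for all large `k`, which forces `a K • x = 0`:
`x` is a torsion point, and there are only countably many of those.
-/

namespace AddCircle

theorem norm_nsmul_eq_mul_norm {p : ℝ} (hp : p ≠ 0) {x : AddCircle p} {n : ℕ}
    (h : n * ‖x‖ ≤ |p| / 2) : ‖n • x‖ = n * ‖x‖ := by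
  induction x using QuotientAddGroup.induction_on with | H v => ?_
  set u := v - round (p⁻¹ * v) * p
  have hu : (u : AddCircle p) = v := by
    rw [coe_sub, sub_eq_self, ← zsmul_eq_mul, coe_zsmul, coe_period, smul_zero]
  have hnorm : ‖(v : AddCircle p)‖ = |u| := norm_eq p
  rw [hnorm] at h ⊢
  rw [← hu, ← coe_nsmul, nsmul_eq_mul, (norm_coe_eq_abs_iff p hp).2, abs_mul, Nat.abs_cast]
  rwa [abs_mul, Nat.abs_cast]

theorem mul_two_pow_norm_le {p δ : ℝ} (hp : p ≠ 0) (hδ : δ ≤ |p| / 4) (J : ℕ) (y : AddCircle p)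
    (h : ∀ j ≤ J, ‖(2 ^ j) • y‖ ≤ δ) : 2 ^ J * ‖y‖ ≤ δ := by
  induction J generalizing y with
  | zero => simpa using h 0 le_rfl
  | succ J ih =>
    have hy : ‖y‖ ≤ δ := by simpa using h 0 (Nat.zero_le _)
    have hdouble : ‖2 • y‖ = 2 * ‖y‖ :=
      norm_nsmul_eq_mul_norm hp (by push_cast; linarith)
    have := ih (2 • y) fun j hj => by simpa [← mul_nsmul, ← pow_succ'] using h (j + 1) (by omega)
    rw [hdouble] at this
    calc 2 ^ (J + 1) * ‖y‖ = 2 ^ J * (2 * ‖y‖) := by ring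
      _ ≤ δ := this

theorem eq_zero_of_nsmul_chain {p : ℝ} (hp : p ≠ 0) (z : ℕ → AddCircle p) (n : ℕ → ℕ)
    (hn : ∀ k, 2 ≤ n k) (hz : ∀ k, z (k + 1) = n k • z k)
    (hsmall : ∀ k, n k * ‖z k‖ ≤ |p| / 2) : z 0 = 0 := by
  have hgrow : ∀ k, 2 ^ k * ‖z 0‖ ≤ ‖z k‖ := by
    intro k
    induction k with
    | zero => simp
    | succ k ih =>
      have h2 : (2 : ℝ) ≤ n k := by exact_mod_cast hn k
      rw [hz, norm_nsmul_eq_mul_norm hp (hsmall k), pow_succ]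
      nlinarith [norm_nonneg (z k)]
  by_contra hne
  have hpos : 0 < ‖z 0‖ := norm_pos_iff.2 hne
  obtain ⟨k, hk⟩ := pow_unbounded_of_one_lt (|p| / ‖z 0‖) one_lt_two
  have := (hgrow k).trans (norm_le_half_period p hp)
  rw [div_lt_iff₀ hpos] at hk
  linarith [abs_nonneg p]

theorem two_pow_mul_norm_le_of_dyadic_pairs {p ε : ℝ} (hp : p ≠ 0) (hε : ε ≤ |p| / 16)
    {m J : ℕ} (hmJ : m ≤ J + 2) (y : AddCircle p)
    (h : ∀ j ≤ J, ‖(2 ^ j * 2 ^ m) • y‖ ≤ ε ∧ ‖(2 ^ j * (2 ^ m + 1)) • y‖ ≤ ε) :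
    2 ^ (m + J) * ‖y‖ ≤ ε := by
  have hp4 : 0 ≤ |p| := abs_nonneg p
  have hchain : ∀ j ≤ J, ‖2 ^ j • y‖ ≤ 2 * ε := by
    intro j hj
    have hsplit : 2 ^ j • y = (2 ^ j * (2 ^ m + 1)) • y - (2 ^ j * 2 ^ m) • y := by
      rw [eq_sub_iff_add_eq, mul_add, mul_one, add_nsmul, add_comm]
    rw [hsplit]
    linarith [norm_sub_le ((2 ^ j * (2 ^ m + 1)) • y) ((2 ^ j * 2 ^ m) • y), h j hj]
  have hy : 2 ^ J * ‖y‖ ≤ 2 * ε := mul_two_pow_norm_le hp (by linarith) J y hchain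
  have hym : 2 ^ J * ‖2 ^ m • y‖ ≤ ε :=
    mul_two_pow_norm_le hp (by linarith) J _ fun j hj => by simpa [mul_nsmul'] using (h j hj).1
  have hmJ' : (2 : ℝ) ^ m ≤ 4 * 2 ^ J := by
    calc (2 : ℝ) ^ m ≤ 2 ^ (J + 2) := pow_le_pow_right₀ one_le_two hmJ
      _ = 4 * 2 ^ J := by ring
  have hsmall : ((2 ^ m : ℕ) : ℝ) * ‖y‖ ≤ |p| / 2 := by
    push_cast
    nlinarith [norm_nonneg y]
  rw [norm_nsmul_eq_mul_norm hp hsmall] at hym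
  push_cast at hym
  calc 2 ^ (m + J) * ‖y‖ = 2 ^ J * (2 ^ m * ‖y‖) := by ring
    _ ≤ ε := hym

end AddCircle

-- The `/ 4` keeps `2 ^ (2 * dyadicGap q) ≤ q`, which the dyadic-pair estimate needs.
def dyadicGap (q : ℕ) : ℕ := Nat.log 2 q / 4

def dyadicDigits (q : ℕ) : Set ℕ :=
  insert 1 {r | ∃ j, (r = 2 ^ j * 2 ^ dyadicGap q ∨ r = 2 ^ j * (2 ^ dyadicGap q + 1)) ∧
    2 ^ j * (2 ^ dyadicGap q + 1) < q}

theorem one_mem_dyadicDigits (q : ℕ) : 1 ∈ dyadicDigits q := Set.mem_insert 1 _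

theorem mul_norm_le_of_forall_dyadicDigits {p ε : ℝ} (hp : p ≠ 0) (hε : ε ≤ |p| / 16) (q : ℕ)
    (y : AddCircle p) (h : ∀ r ∈ dyadicDigits q, ‖r • y‖ ≤ ε) : q * ‖y‖ ≤ 8 * ε := by
  have hy : ‖y‖ ≤ ε := by simpa using h 1 (one_mem_dyadicDigits q)
  have hy0 := norm_nonneg y
  rcases lt_or_ge q 4 with hq | hq
  · have : (q : ℝ) ≤ 3 := by exact_mod_cast Nat.le_of_lt_succ hq
    nlinarith
  set L := Nat.log 2 q
  set m := dyadicGap q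
  have hL : 2 ≤ L := Nat.le_log_of_pow_le one_lt_two hq
  have hm : m = L / 4 := rfl
  set J := L - m - 2
  have hpairs : ∀ j ≤ J, 2 ^ j * (2 ^ m + 1) < q := by
    intro j hj
    calc 2 ^ j * (2 ^ m + 1) ≤ 2 ^ j * 2 ^ (m + 1) := by
          gcongr; rw [pow_succ]; linarith [Nat.one_le_two_pow (n := m)]
      _ < 2 ^ L := by rw [← pow_add]; exact Nat.pow_lt_pow_right one_lt_two (by omega)
      _ ≤ q := Nat.pow_log_le_self 2 (by omega)
  have hblock := AddCircle.two_pow_mul_norm_le_of_dyadic_pairs hp hε (m := m) (J := J)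
    (by omega) y fun j hj =>
      ⟨h _ (Or.inr ⟨j, Or.inl rfl, hpairs j hj⟩), h _ (Or.inr ⟨j, Or.inr rfl, hpairs j hj⟩)⟩
  have hqL : (q : ℝ) ≤ 8 * 2 ^ (m + J) := by
    have : q < 2 ^ (m + J + 3) := by
      rw [show m + J + 3 = L + 1 by omega]; exact Nat.lt_pow_succ_log_self one_lt_two q
    calc (q : ℝ) ≤ ((2 ^ (m + J + 3) : ℕ) : ℝ) := by exact_mod_cast this.le
      _ = 8 * 2 ^ (m + J) := by push_cast; ring
  nlinarith

theorem one_le_and_lt_of_mem_dyadicDigits {q r : ℕ} (hq : 2 ≤ q) (hr : r ∈ dyadicDigits q) :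
    1 ≤ r ∧ r < q := by
  rcases hr with rfl | ⟨j, hr, hlt⟩
  · exact ⟨le_rfl, hq⟩
  have h1 : 1 ≤ 2 ^ j * 2 ^ dyadicGap q := Nat.one_le_iff_ne_zero.2 (by positivity)
  have h2 : 2 ^ j * 2 ^ dyadicGap q ≤ 2 ^ j * (2 ^ dyadicGap q + 1) := by gcongr; omega
  rcases hr with rfl | rfl <;> omega

theorem two_pow_dyadicGap_le_of_mem {q r : ℕ} (hr : r ∈ dyadicDigits q) (hr1 : r ≠ 1) :
    2 ^ dyadicGap q ≤ r := by
  rcases hr with rfl | ⟨j, rfl | rfl, -⟩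
  · exact absurd rfl hr1
  · exact Nat.le_mul_of_pos_left _ (by positivity)
  · exact (Nat.le_succ _).trans (Nat.le_mul_of_pos_left _ (by positivity))

theorem two_pow_dyadicGap_le {q : ℕ} (hq : q ≠ 0) : 2 ^ dyadicGap q ≤ q :=
  (Nat.pow_le_pow_right two_pos (Nat.div_le_self _ _)).trans (Nat.pow_log_le_self 2 hq)

theorem le_dyadicGap {q C : ℕ} (h : 2 ^ (4 * C) ≤ q) : C ≤ dyadicGap q := by
  have := Nat.le_log_of_pow_le one_lt_two h
  unfold dyadicGap
  omega

def dyadicSet (a : ℕ → ℕ) : Set ℕ :=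
  {s | ∃ k, ∃ r ∈ dyadicDigits (ratioSeq a (k + 1)), s = r * a k}

def dyadicSeq (a : ℕ → ℕ) : ℕ → ℕ := Nat.nth (· ∈ dyadicSet a)

theorem apply_mem_dyadicSet (a : ℕ → ℕ) (k : ℕ) : a k ∈ dyadicSet a :=
  ⟨k, 1, one_mem_dyadicDigits _, (one_mul _).symm⟩

theorem exists_forall_norm_nsmul_le_of_mem_charSub {e : ℕ → ℕ} (he : StrictMono e)
    {x : Circle1} (hx : x ∈ charSub e) {ε : ℝ} (hε : 0 < ε) :
    ∃ N, ∀ n, N ≤ e n → ‖e n • x‖ ≤ ε := by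
  obtain ⟨N, hN⟩ := Metric.tendsto_atTop.1 hx ε hε
  refine ⟨e N, fun n hn => ?_⟩
  simpa using (hN n (he.le_iff_le.1 hn)).le

namespace IsArithSeq

variable {a : ℕ → ℕ}

theorem ratioSeq_mul (ha : IsArithSeq a) (k : ℕ) : ratioSeq a (k + 1) * a k = a (k + 1) :=
  Nat.div_mul_cancel (ha.2.2 k)

theorem two_le_ratioSeq (ha : IsArithSeq a) (k : ℕ) : 2 ≤ ratioSeq a (k + 1) := by
  have hlt : a k < a (k + 1) := ha.2.1 k.lt_succ_self
  by_contra! hq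
  have : ratioSeq a (k + 1) * a k ≤ 1 * a k := Nat.mul_le_mul_right _ (by omega)
  rw [ha.ratioSeq_mul] at this
  omega

theorem dyadicSet_infinite (ha : IsArithSeq a) : (dyadicSet a).Infinite :=
  Set.infinite_of_injective_forall_mem ha.2.1.injective (apply_mem_dyadicSet a)

theorem dyadicSeq_strictMono (ha : IsArithSeq a) : StrictMono (dyadicSeq a) :=
  Nat.nth_strictMono ha.dyadicSet_infinite

theorem range_dyadicSeq (ha : IsArithSeq a) : Set.range (dyadicSeq a) = dyadicSet a :=
  Nat.range_nth_of_infinite ha.dyadicSet_infinite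

theorem dyadicSet_subset_DSet (ha : IsArithSeq a) : dyadicSet a ⊆ DSet a := by
  rintro _ ⟨k, r, hr, rfl⟩
  have := one_le_and_lt_of_mem_dyadicDigits (ha.two_le_ratioSeq k) hr
  exact ⟨k + 1, by omega, r, this.1, by omega, rfl⟩

theorem isArithTypeSeq_dyadicSeq (ha : IsArithSeq a) : IsArithTypeSeq a (dyadicSeq a) :=
  ⟨ha.dyadicSeq_strictMono, fun k _ => ha.range_dyadicSeq ▸ apply_mem_dyadicSet a k,
    ha.range_dyadicSeq ▸ ha.dyadicSet_subset_DSet⟩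

theorem two_pow_dyadicGap_mul_le (ha : IsArithSeq a) {k s : ℕ} (hs : s ∈ dyadicSet a)
    (hlt : a k < s) : 2 ^ dyadicGap (ratioSeq a (k + 1)) * a k ≤ s := by
  obtain ⟨k', r, hr, rfl⟩ := hs
  have hr' := one_le_and_lt_of_mem_dyadicDigits (ha.two_le_ratioSeq k') hr
  rcases lt_trichotomy k' k with hk | rfl | hk
  · have : r * a k' < a (k' + 1) := by
      rw [← ha.ratioSeq_mul]; exact Nat.mul_lt_mul_of_pos_right hr'.2 (ha.pos k')
    have : a (k' + 1) ≤ a k := ha.2.1.monotone hk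
    omega
  · have hr1 : r ≠ 1 := by rintro rfl; omega
    exact Nat.mul_le_mul_right _ (two_pow_dyadicGap_le_of_mem hr hr1)
  · calc 2 ^ dyadicGap (ratioSeq a (k + 1)) * a k ≤ ratioSeq a (k + 1) * a k :=
          Nat.mul_le_mul_right _ (two_pow_dyadicGap_le (by have := ha.two_le_ratioSeq k; omega))
      _ = a (k + 1) := ha.ratioSeq_mul k
      _ ≤ a k' := ha.2.1.monotone hk
      _ ≤ r * a k' := Nat.le_mul_of_pos_left _ hr'.1

theorem dyadicSeq_ratio_unbounded (ha : IsArithSeq a)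
    (hq : ∀ C : ℕ, ∃ n, 1 ≤ n ∧ C < ratioSeq a n) (C : ℕ) :
    ∃ n, C * dyadicSeq a n < dyadicSeq a (n + 1) := by
  obtain ⟨_ | k, hk, hC⟩ := hq (2 ^ (4 * C))
  · omega
  obtain ⟨n, hn⟩ : a k ∈ Set.range (dyadicSeq a) := ha.range_dyadicSeq ▸ apply_mem_dyadicSet a k
  refine ⟨n, ?_⟩
  have hnext : dyadicSeq a (n + 1) ∈ dyadicSet a := ha.range_dyadicSeq ▸ ⟨n + 1, rfl⟩
  have hlt : a k < dyadicSeq a (n + 1) := hn ▸ ha.dyadicSeq_strictMono n.lt_succ_self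
  have hgap : C < 2 ^ dyadicGap (ratioSeq a (k + 1)) :=
    (le_dyadicGap hC.le).trans_lt Nat.lt_two_pow_self
  rw [hn]
  exact (Nat.mul_lt_mul_of_pos_right hgap (ha.pos k)).trans_le
    (ha.two_pow_dyadicGap_mul_le hnext hlt)

theorem exists_nsmul_eq_zero_of_mem_charSub (ha : IsArithSeq a) {x : Circle1}
    (hx : x ∈ charSub (dyadicSeq a)) : ∃ K, a K • x = 0 := by
  obtain ⟨N, hN⟩ := exists_forall_norm_nsmul_le_of_mem_charSub ha.dyadicSeq_strictMono hx
    (ε := 1 / 16) (by norm_num)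
  have hsmall : ∀ k, N ≤ k → ratioSeq a (k + 1) * ‖a k • x‖ ≤ 1 / 2 := by
    intro k hk
    suffices ratioSeq a (k + 1) * ‖a k • x‖ ≤ 8 * (1 / 16) by linarith
    refine mul_norm_le_of_forall_dyadicDigits one_ne_zero (by norm_num) _ _ fun r hr => ?_
    obtain ⟨n, hn⟩ : r * a k ∈ Set.range (dyadicSeq a) := ha.range_dyadicSeq ▸ ⟨k, r, hr, rfl⟩
    have hr1 := (one_le_and_lt_of_mem_dyadicDigits (ha.two_le_ratioSeq k) hr).1
    rw [← mul_nsmul', ← hn]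
    refine hN n ?_
    calc N ≤ a k := hk.trans (ha.2.1.id_le k)
      _ ≤ r * a k := Nat.le_mul_of_pos_left _ hr1
      _ = dyadicSeq a n := hn.symm
  refine ⟨N, AddCircle.eq_zero_of_nsmul_chain one_ne_zero (fun i => a (N + i) • x)
    (fun i => ratioSeq a (N + i + 1)) (fun i => ha.two_le_ratioSeq _) (fun i => ?_)
    (fun i => by simpa using hsmall (N + i) (by omega))⟩
  rw [← add_assoc, ← ha.ratioSeq_mul, mul_nsmul']

theorem charSub_dyadicSeq_countable (ha : IsArithSeq a) : (charSub (dyadicSeq a)).Countable :=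
  (Set.countable_iUnion fun K => (AddCircle.finite_torsion 1 (ha.pos K)).countable).mono
    fun _ hx => Set.mem_iUnion.2 (ha.exists_nsmul_eq_zero_of_mem_charSub hx)

end IsArithSeq

/-- for any arithmetic sequence with unbounded ratio sequence, there is an
arithmetic-type sequence with unbounded ratio whose characterized subgroup is countable. -/
theorem exists_arithType_unbounded_ratio_countable (a : ℕ → ℕ) (ha : IsArithSeq a)
    (hq : ∀ C : ℕ, ∃ n, 1 ≤ n ∧ C < ratioSeq a n) :
    ∃ e : ℕ → ℕ, IsArithTypeSeq a e ∧
      (∀ C : ℕ, ∃ n, C * e n < e (n + 1)) ∧ (charSub e).Countable :=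
  ⟨dyadicSeq a, ha.isArithTypeSeq_dyadicSeq, ha.dyadicSeq_ratio_unbounded hq,
    ha.charSub_dyadicSeq_countable⟩
end
end

section
/- Let (a_n) be an arithmetic sequence, (e_n) an arithmetic-type sequence associated with (a_n), and let x ∈ t_{(e_n)}(𝕋) have canonical digits (c_n) with supp(x) infinite but not cofinite in ℕ. Then the set B = {n ∈ supp(x) : n + 1 ∉ supp(x)} is infinite, B is q-divergent, and ‖c_n/q_n‖ → 0 as n → ∞ along B, where ‖t‖ denotes the distance from the real number t to the nearest integer. -/
open Filter Topology

noncomputable section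

/-- Distance from a real number to the nearest integer, `‖t‖`. -/
def nearestIntDist (t : ℝ) : ℝ := |t - (round t : ℤ)|

lemma arith_pos {a : ℕ → ℕ} (ha : IsArithSeq a) (n : ℕ) : 0 < a n := by
  have h := ha.2.1.monotone (Nat.zero_le n)
  rw [ha.1] at h
  omega
  
lemma arith_mul {a : ℕ → ℕ} (ha : IsArithSeq a) (k : ℕ) :
    a (k + 1) = ratioSeq a (k + 1) * a k := by
  have h := ha.2.2 k
  simp only [ratioSeq, Nat.add_sub_cancel]
  exact (Nat.div_mul_cancel h).symm

lemma arith_q_ge {a : ℕ → ℕ} (ha : IsArithSeq a) (k : ℕ) : 2 ≤ ratioSeq a (k + 1) := by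
  have h1 := arith_mul ha k
  have h2 := ha.2.1 (Nat.lt_succ_self k)
  have h3 := arith_pos ha k
  nlinarith [h1, h2, h3]

lemma arith_dvd {a : ℕ → ℕ} (ha : IsArithSeq a) {m n : ℕ} (h : m ≤ n) : a m ∣ a n := by
  induction n with
  | zero => simp_all
  | succ n ih =>
    rcases Nat.le_succ_iff.mp h with h' | h'
    · exact (ih h').trans (ha.2.2 n)
    · exact h' ▸ dvd_rfl

lemma arith_two_pow {a : ℕ → ℕ} (ha : IsArithSeq a) (n : ℕ) : 2 ^ n ≤ a n := by
  induction n with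
  | zero => simp [ha.1]
  | succ n ih =>
    have h1 := arith_mul ha n
    have h2 := arith_q_ge ha n
    have h3 := arith_pos ha n
    calc 2 ^ (n+1) = 2 * 2 ^ n := by ring
    _ ≤ 2 * a n := by omega
    _ ≤ ratioSeq a (n+1) * a n := Nat.mul_le_mul_right _ h2
    _ = a (n+1) := h1.symm

section Core
variable {a c : ℕ → ℕ}

lemma digit_le_real (ha : IsArithSeq a) (hd : ∀ n, 1 ≤ n → c n ≤ ratioSeq a n - 1) (n : ℕ) :
    (c (n + 1) : ℝ) ≤ (ratioSeq a (n + 1) : ℝ) - 1 := by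
  have h1 := hd (n + 1) (by omega)
  have h2 := arith_q_ge ha n
  have : (c (n+1) : ℝ) ≤ ((ratioSeq a (n+1) - 1 : ℕ) : ℝ) := by exact_mod_cast h1
  rw [Nat.cast_sub (by omega)] at this
  simpa using this

lemma g_le (ha : IsArithSeq a) (hd : ∀ n, 1 ≤ n → c n ≤ ratioSeq a n - 1) (n : ℕ) :
    (c (n + 1) : ℝ) / (a (n + 1) : ℝ) ≤ 1 / (a n : ℝ) - 1 / (a (n + 1) : ℝ) := by
  have hA : (0:ℝ) < (a n : ℝ) := by exact_mod_cast arith_pos ha n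
  have hQ : (2:ℝ) ≤ (ratioSeq a (n+1) : ℝ) := by exact_mod_cast arith_q_ge ha n
  have hA1 : (a (n+1) : ℝ) = (ratioSeq a (n+1) : ℝ) * (a n : ℝ) := by
    exact_mod_cast arith_mul ha n
  have hc := digit_le_real ha hd n
  have hA1pos : (0:ℝ) < (a (n+1) : ℝ) := by exact_mod_cast arith_pos ha (n+1)
  rw [div_le_iff₀ hA1pos, sub_mul, div_mul_eq_mul_div, div_mul_eq_mul_div,
    le_sub_iff_add_le]
  rw [hA1]
  have hQ0 : (0:ℝ) < (ratioSeq a (n+1) : ℝ) := by linarith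
  field_simp
  nlinarith [hc, hA, hQ0]

lemma g_summable (ha : IsArithSeq a) (hd : ∀ n, 1 ≤ n → c n ≤ ratioSeq a n - 1) :
    Summable (fun n => (c (n + 1) : ℝ) / (a (n + 1) : ℝ)) := by
  have hb : Summable (fun n : ℕ => (1/2 : ℝ) ^ n) :=
    summable_geometric_of_lt_one (by norm_num) (by norm_num)
  refine Summable.of_nonneg_of_le (fun n => by positivity) (fun n => ?_) hb
  · 
    have h1 := g_le ha hd n
    have hA1 : (0:ℝ) < (a (n+1) : ℝ) := by exact_mod_cast arith_pos ha (n+1)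
    have h2 : (2:ℝ) ^ n ≤ (a n : ℝ) := by exact_mod_cast arith_two_pow ha n
    have h3 : 1 / (a n : ℝ) ≤ (1/2 : ℝ) ^ n := by
      rw [div_pow, one_pow]
      exact one_div_le_one_div_of_le (by positivity) h2
    have h4 : 1 / (a (n+1) : ℝ) ≥ 0 := by positivity
    linarith

lemma tail_nonneg (ha : IsArithSeq a) (k : ℕ) :
    0 ≤ ∑' i, (c (i + k + 1) : ℝ) / (a (i + k + 1) : ℝ) :=
  tsum_nonneg (fun i => by positivity)

lemma tail_le (ha : IsArithSeq a) (hd : ∀ n, 1 ≤ n → c n ≤ ratioSeq a n - 1) (k : ℕ) :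
    (∑' i, (c (i + k + 1) : ℝ) / (a (i + k + 1) : ℝ)) ≤ 1 / (a k : ℝ) := by
  apply Real.tsum_le_of_sum_range_le (fun i => by positivity)
  intro N
  have tele : ∑ i ∈ Finset.range N, (1 / (a (i + k) : ℝ) - 1 / (a (i + 1 + k) : ℝ))
      = 1 / (a k : ℝ) - 1 / (a (N + k) : ℝ) := by
    have := Finset.sum_range_sub' (f := fun i => 1 / (a (i + k) : ℝ)) N
    simpa using this
  calc ∑ i ∈ Finset.range N, (c (i + k + 1) : ℝ) / (a (i + k + 1) : ℝ)
      ≤ ∑ i ∈ Finset.range N, (1 / (a (i + k) : ℝ) - 1 / (a (i + 1 + k) : ℝ)) := by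
        apply Finset.sum_le_sum
        intro i _
        have := g_le ha hd (i + k)
        have e1 : i + 1 + k = i + k + 1 := by omega
        rw [e1]
        exact this
    _ = 1 / (a k : ℝ) - 1 / (a (N + k) : ℝ) := tele
    _ ≤ 1 / (a k : ℝ) := by
        have : (0:ℝ) < (a (N + k) : ℝ) := by exact_mod_cast arith_pos ha (N + k)
        have : 0 ≤ 1 / (a (N + k) : ℝ) := by positivity
        linarith

end Core

section Core2
variable {a c : ℕ → ℕ}

lemma tail_rec (ha : IsArithSeq a) (hd : ∀ n, 1 ≤ n → c n ≤ ratioSeq a n - 1) (m : ℕ) :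
    (∑' i, (c (i + m + 1) : ℝ) / (a (i + m + 1) : ℝ))
      = (c (m + 1) : ℝ) / (a (m + 1) : ℝ)
        + ∑' i, (c (i + (m + 1) + 1) : ℝ) / (a (i + (m + 1) + 1) : ℝ) := by
  have hs : Summable (fun i => (c (i + m + 1) : ℝ) / (a (i + m + 1) : ℝ)) :=
    (summable_nat_add_iff m).2 (g_summable ha hd)
  rw [Summable.tsum_eq_zero_add hs]
  congr 1
  · norm_num
  · apply tsum_congr
    intro i
    have e : i + 1 + m + 1 = i + (m + 1) + 1 := by omega
    rw [e]

lemma smul_eq_tail (ha : IsArithSeq a) (hd : ∀ n, 1 ≤ n → c n ≤ ratioSeq a n - 1)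
    {x : Circle1}
    (hxrep : x = ((∑' n : ℕ, (c (n + 1) : ℝ) / (a (n + 1) : ℝ) : ℝ) : Circle1)) (k : ℕ) :
    a k • x
      = (((a k : ℝ) * ∑' i, (c (i + k + 1) : ℝ) / (a (i + k + 1) : ℝ) : ℝ) : Circle1) := by
  rw [hxrep, ← AddCircle.coe_nsmul, ← sub_eq_zero, ← AddCircle.coe_sub,
    AddCircle.coe_eq_zero_iff]
  refine ⟨((∑ i ∈ Finset.range k, c (i + 1) * (a k / a (i + 1)) : ℕ) : ℤ), ?_⟩
  rw [zsmul_eq_mul, mul_one]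
  have hsplit := Summable.sum_add_tsum_nat_add k (g_summable (c := c) ha hd)
  rw [Int.cast_natCast, nsmul_eq_mul, ← hsplit, mul_add, add_sub_cancel_right,
    Nat.cast_sum, Finset.mul_sum]
  apply Finset.sum_congr rfl
  intro i hi
  have hdvd : a (i + 1) ∣ a k := arith_dvd ha (Finset.mem_range.mp hi)
  have hne : ((a (i + 1) : ℝ)) ≠ 0 := by
    have := arith_pos ha (i + 1); positivity
  rw [Nat.cast_mul, Nat.cast_div hdvd hne]
  field_simp

lemma key_estimates (ha : IsArithSeq a) (hd : ∀ n, 1 ≤ n → c n ≤ ratioSeq a n - 1)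
    {x : Circle1}
    (hxrep : x = ((∑' n : ℕ, (c (n + 1) : ℝ) / (a (n + 1) : ℝ) : ℝ) : Circle1))
    (k : ℕ) (hck : c (k + 1) ≠ 0) (hck1 : c (k + 2) = 0) :
    1 / (2 * (ratioSeq a (k + 1) : ℝ)) ≤ ‖(a k • x : Circle1)‖ ∧
      nearestIntDist ((c (k + 1) : ℝ) / (ratioSeq a (k + 1) : ℝ))
        ≤ 2 * ‖(a k • x : Circle1)‖ := by
  have hq2 : (2 : ℝ) ≤ (ratioSeq a (k + 1) : ℝ) := by exact_mod_cast arith_q_ge ha k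
  have hA : (0 : ℝ) < (a k : ℝ) := by exact_mod_cast arith_pos ha k
  have hA2 : (0 : ℝ) < (a (k + 2) : ℝ) := by exact_mod_cast arith_pos ha (k + 2)
  have hA1 : (a (k + 1) : ℝ) = (ratioSeq a (k + 1) : ℝ) * (a k : ℝ) := by
    exact_mod_cast arith_mul ha k
  have hcc1' : (1 : ℝ) ≤ (c (k + 1) : ℝ) := by
    have : 1 ≤ c (k + 1) := Nat.one_le_iff_ne_zero.mpr hck
    exact_mod_cast this
  set q : ℝ := (ratioSeq a (k + 1) : ℝ) with hqdef
  have hq0 : (0 : ℝ) < q := by linarith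
  set S : ℕ → ℝ := fun m => ∑' i, (c (i + m + 1) : ℝ) / (a (i + m + 1) : ℝ) with hSdef
  have hrec : ∀ m, S m = (c (m + 1) : ℝ) / (a (m + 1) : ℝ) + S (m + 1) :=
    fun m => tail_rec ha hd m
  have hS2nn : 0 ≤ S (k + 2) := tail_nonneg ha _
  have hS2le : S (k + 2) ≤ 1 / (a (k + 2) : ℝ) := tail_le ha hd _
  set ε : ℝ := (a k : ℝ) * S (k + 2) with hεdef
  have hεnn : 0 ≤ ε := mul_nonneg hA.le hS2nn
  have hεle : ε ≤ 1 / (2 * q) := by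
    have h1 : 2 * q * (a k : ℝ) ≤ (a (k + 2) : ℝ) := by
      have e1 : a (k + 2) = ratioSeq a (k + 2) * a (k + 1) := arith_mul ha (k + 1)
      have e3 : 2 ≤ ratioSeq a (k + 2) := arith_q_ge ha (k + 1)
      have e4 : 2 * a (k + 1) ≤ a (k + 2) := by
        rw [e1]; exact Nat.mul_le_mul_right _ e3
      have e5 : (2 : ℝ) * (a (k + 1) : ℝ) ≤ (a (k + 2) : ℝ) := by exact_mod_cast e4
      rw [hA1] at e5; linarith
    calc ε ≤ (a k : ℝ) * (1 / (a (k + 2) : ℝ)) := mul_le_mul_of_nonneg_left hS2le hA.le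
      _ ≤ 1 / (2 * q) := by
          rw [mul_one_div, div_le_div_iff₀ hA2 (by positivity)]
          nlinarith
  set cc : ℝ := (c (k + 1) : ℝ) with hccdef
  have hcc1 : (1 : ℝ) ≤ cc := hcc1'
  have hccq : cc ≤ q - 1 := digit_le_real ha hd k
  set y : ℝ := cc / q + ε with hydef
  have hSk : (a k : ℝ) * S k = y := by
    have h1 : S k = cc / (a (k + 1) : ℝ) + S (k + 1) := hrec k
    have h2 : S (k + 1) = S (k + 2) := by
      have := hrec (k + 1)
      rw [hck1] at this
      simpa using this
    rw [h1, h2, hydef, hεdef, mul_add]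
    congr 1
    rw [hA1]
    field_simp
  have hnorm : ‖(a k • x : Circle1)‖ = |y - (round y : ℤ)| := by
    rw [smul_eq_tail ha hd hxrep k]
    show ‖((((a k : ℝ) * S k) : ℝ) : Circle1)‖ = _
    rw [hSk, AddCircle.norm_eq]
    norm_num
  have h2q : 1 / (2 * q) ≤ 1 / q := by
    apply one_div_le_one_div_of_le hq0
    linarith
  have hy_lb : 1 / q ≤ y := by
    have : 1 / q ≤ cc / q := by gcongr
    linarith
  have hy_ub : y ≤ 1 - 1 / (2 * q) := by
    have h1 : cc / q ≤ (q - 1) / q := by gcongr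
    have h2 : (q - 1) / q = 1 - 1 / q := by field_simp
    rw [h2] at h1
    have h3 : 2 * (1 / (2 * q)) = 1 / q := by field_simp
    linarith
  have hlow : ∀ m : ℤ, 1 / (2 * q) ≤ |y - (m : ℝ)| := by
    intro m
    rcases le_or_gt (m : ℝ) 0 with hm | hm
    · have : 1 / (2 * q) ≤ y - (m : ℝ) := by linarith
      exact this.trans (le_abs_self _)
    · have hm0 : (0 : ℤ) < m := by exact_mod_cast hm
      have hm1 : (1 : ℝ) ≤ (m : ℝ) := by exact_mod_cast hm0
      have : 1 / (2 * q) ≤ (m : ℝ) - y := by linarith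
      calc 1 / (2 * q) ≤ (m : ℝ) - y := this
        _ ≤ |(m : ℝ) - y| := le_abs_self _
        _ = |y - (m : ℝ)| := abs_sub_comm _ _
  constructor
  · rw [hnorm]
    exact hlow (round y)
  · rw [hnorm]
    have hr1 : nearestIntDist (cc / q) ≤ |cc / q - ((round y : ℤ) : ℝ)| := by
      unfold nearestIntDist
      exact round_le (cc / q) (round y)
    have hccy : cc / q = y - ε := by rw [hydef]; ring
    have hr2 : |cc / q - ((round y : ℤ) : ℝ)| ≤ |y - (round y : ℤ)| + ε := by
      rw [hccy]
      calc |y - ε - ((round y : ℤ) : ℝ)| = |(y - ((round y : ℤ) : ℝ)) - ε| := by ring_nf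
        _ ≤ |y - ((round y : ℤ) : ℝ)| + |ε| := abs_sub _ _
        _ = |y - ((round y : ℤ) : ℝ)| + ε := by rw [abs_of_nonneg hεnn]
    have hr3 : ε ≤ |y - ((round y : ℤ) : ℝ)| := hεle.trans (hlow (round y))
    linarith
end Core2

theorem noncofinite_support_structure (a e : ℕ → ℕ) (ha : IsArithSeq a)
    (he : IsArithTypeSeq a e) (x : Circle1) (hx : x ∈ charSub e) (c : ℕ → ℕ)
    (hc : IsCanonicalRep a c x) (hinf : (suppOf c).Infinite)
    (hnotcof : ({n | 1 ≤ n} \ suppOf c).Infinite) :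
    letI B : Set ℕ := {n | n ∈ suppOf c ∧ n + 1 ∉ suppOf c}
    B.Infinite ∧
      Tendsto (fun n => ratioSeq a n) (atTop ⊓ 𝓟 B) atTop ∧
      Tendsto (fun n => nearestIntDist ((c n : ℝ) / (ratioSeq a n : ℝ)))
        (atTop ⊓ 𝓟 B) (nhds 0) := by
  set B : Set ℕ := {n | n ∈ suppOf c ∧ n + 1 ∉ suppOf c} with hBdef
  classical
  obtain ⟨hd, hinf2, hxrep⟩ := hc
  -- a_k • x → 0
  choose φ hφ using fun k => he.2.1 (k + 1) (Nat.le_add_left 1 k)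
  have hφmono : StrictMono φ := by
    intro i j hij
    have h1 : a (i + 1) < a (j + 1) := ha.2.1 (by omega)
    rw [← hφ i, ← hφ j] at h1
    exact he.1.lt_iff_lt.mp h1
  have hA1 : Tendsto (fun k => a (k + 1) • x) atTop (nhds (0 : Circle1)) := by
    have h2 := Tendsto.comp hx hφmono.tendsto_atTop
    simpa only [Function.comp_def, hφ] using h2
  have hA : Tendsto (fun k => a k • x) atTop (nhds (0 : Circle1)) :=
    (tendsto_add_atTop_iff_nat 1).mp hA1
  have hN : Tendsto (fun k => ‖a k • x‖) atTop (nhds (0 : ℝ)) := by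
    rwa [tendsto_zero_iff_norm_tendsto_zero] at hA
  -- B membership consequences
  have hBcons : ∀ n ∈ B, c n ≠ 0 ∧ 1 ≤ n ∧ c (n + 1) = 0 := by
    intro n hn
    rw [hBdef] at hn
    refine ⟨hn.1.2, hn.1.1, ?_⟩
    by_contra h
    exact hn.2 ⟨by omega, h⟩
  -- Part 1
  have hBinf : B.Infinite := by
    apply Set.infinite_of_forall_exists_gt
    intro N
    obtain ⟨n0, hn0s, hn0gt⟩ := hinf.exists_gt N
    obtain ⟨m, hm, hmgt⟩ := hnotcof.exists_gt n0
    letI inst : DecidablePred (fun j : ℕ => n0 ≤ j ∧ j ∈ suppOf c) :=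
      fun _ => Classical.dec _
    have hn01 : 1 ≤ n0 := hn0s.1
    have hn0le : n0 ≤ m - 1 := by omega
    set n := Nat.findGreatest (fun j : ℕ => n0 ≤ j ∧ j ∈ suppOf c) (m - 1) with hndef
    have hPn : n0 ≤ n ∧ n ∈ suppOf c :=
      Nat.findGreatest_spec (P := fun j : ℕ => n0 ≤ j ∧ j ∈ suppOf c) hn0le ⟨le_rfl, hn0s⟩
    have hnge : n0 ≤ n := hPn.1
    have hnle : n ≤ m - 1 := Nat.findGreatest_le (P := fun j : ℕ => n0 ≤ j ∧ j ∈ suppOf c) (m - 1)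
    rw [hBdef]
    refine ⟨n, ⟨hPn.2, ?_⟩, by omega⟩
    intro hsup
    rcases Nat.lt_or_ge (n + 1) m with h | h
    · have hng : ¬ (n0 ≤ n + 1 ∧ (n + 1) ∈ suppOf c) :=
        Nat.findGreatest_is_greatest (P := fun j : ℕ => n0 ≤ j ∧ j ∈ suppOf c) (n := m - 1) (by omega) (by omega)
      exact hng ⟨by omega, hsup⟩
    · have heq : n + 1 = m := by omega
      exact hm.2 (heq ▸ hsup)
  -- Part 2
  have hq_div : Tendsto (fun n => ratioSeq a n) (atTop ⊓ 𝓟 B) atTop := by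
    rw [tendsto_atTop]
    intro b
    have hδ : (0 : ℝ) < 1 / (2 * ((b : ℝ) + 1)) := by positivity
    have hev : ∀ᶠ k in atTop, ‖a k • x‖ < 1 / (2 * ((b : ℝ) + 1)) :=
      hN.eventually (gt_mem_nhds hδ)
    obtain ⟨K, hK⟩ := eventually_atTop.mp hev
    rw [eventually_inf_principal]
    filter_upwards [eventually_ge_atTop (K + 1)] with n hn hnB
    obtain ⟨hcn, hn1, hcn1⟩ := hBcons n hnB
    obtain ⟨k, rfl⟩ : ∃ k, n = k + 1 := ⟨n - 1, by omega⟩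
    have hkey := (key_estimates ha hd hxrep k hcn hcn1).1
    have hk := hK k (by omega)
    have hlt : 1 / (2 * (ratioSeq a (k + 1) : ℝ)) < 1 / (2 * ((b : ℝ) + 1)) :=
      lt_of_le_of_lt hkey hk
    have hq2 : (2 : ℝ) ≤ (ratioSeq a (k + 1) : ℝ) := by exact_mod_cast arith_q_ge ha k
    have h1 : (0 : ℝ) < 2 * ((b : ℝ) + 1) := by positivity
    have h2 : (0 : ℝ) < 2 * (ratioSeq a (k + 1) : ℝ) := by linarith
    rw [div_lt_div_iff₀ h2 h1] at hlt
    have h3 : ((b + 1 : ℕ) : ℝ) < ((ratioSeq a (k + 1) : ℕ) : ℝ) := by push_cast; linarith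
    have h4 : b + 1 < ratioSeq a (k + 1) := by exact_mod_cast h3
    omega
  -- Part 3
  have hnd : Tendsto (fun n => nearestIntDist ((c n : ℝ) / (ratioSeq a n : ℝ)))
      (atTop ⊓ 𝓟 B) (nhds 0) := by
    have hg0 : Tendsto (fun n : ℕ => 2 * ‖a (n - 1) • x‖) (atTop ⊓ 𝓟 B) (nhds 0) := by
      have h1 : Tendsto (fun n : ℕ => ‖a (n - 1) • x‖) atTop (nhds 0) :=
        hN.comp (tendsto_sub_atTop_nat 1)
      have h2 := h1.const_mul (2 : ℝ)
      simp only [mul_zero] at h2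
      exact h2.mono_left inf_le_left
    refine squeeze_zero' (Eventually.of_forall fun n => ?_) ?_ hg0
    · unfold nearestIntDist; positivity
    · rw [eventually_inf_principal]
      filter_upwards with n hnB
      obtain ⟨hcn, hn1, hcn1⟩ := hBcons n hnB
      obtain ⟨k, rfl⟩ : ∃ k, n = k + 1 := ⟨n - 1, by omega⟩
      have hkey := (key_estimates ha hd hxrep k hcn hcn1).2
      simpa using hkey
  exact ⟨hBinf, hq_div, hnd⟩
end
end
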